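/- arXiv:2202.03348 — 6 statements merged into one kernel-verified Lean document; each statement's English description precedes it below -/
import Mathlib

section
/- Let σ > 0, let p : ℝ → ℝ be continuous and nonnegative, let λ ≠ 0, and let φ : ℝ → ℝ be continuous with ∫_ℝ p(y)|φ(y)| dy < ∞. Suppose that for all x ∈ ℝ, λ φ(x) = ∫_ℝ p(y) exp(−|x−y|/σ) φ(y) dy. Then φ is twice differentiable on ℝ and for all x, φ''(x) = (−2 p(x)/(λσ) + 1/σ²) φ(x). -/
open MeasureTheory Real Set

lemma my_integral_Ioi_sub_Ioi {g : ℝ → ℝ} {a b : ℝ}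
    (ha : IntegrableOn g (Ioi a)) (hb : IntegrableOn g (Ioi b)) :
    (∫ x in Ioi a, g x) - ∫ x in Ioi b, g x = ∫ x in a..b, g x := by
  wlog hab : a ≤ b generalizing a b
  · rw [intervalIntegral.integral_symm, ← this hb ha (le_of_not_ge hab), neg_sub]
  rw [sub_eq_iff_eq_add, intervalIntegral.integral_of_le hab,
    ← setIntegral_union (Ioc_disjoint_Ioi le_rfl) measurableSet_Ioi
      (ha.mono_set Ioc_subset_Ioi_self) hb, Ioc_union_Ioi_eq_Ioi hab]

/-- If `(λ, φ)` is an eigenpair of the Laplace kernel with width `σ`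
with respect to the density `p`, then `φ` is twice differentiable and satisfies
`φ'' = (-2 p/(λσ) + 1/σ²) φ`. -/
theorem laplace_kernel_eigenfunction_ode
    (σ : ℝ) (hσ : 0 < σ)
    (p : ℝ → ℝ) (hp_cont : Continuous p) (hp_nonneg : ∀ x, 0 ≤ p x)
    (lam : ℝ) (hlam : lam ≠ 0)
    (φ : ℝ → ℝ) (hφ_cont : Continuous φ)
    (hφ_int : Integrable (fun y => p y * |φ y|))
    (heig : ∀ x : ℝ, lam * φ x = ∫ y : ℝ, p y * Real.exp (-|x - y| / σ) * φ y) :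
    (∀ x : ℝ, DifferentiableAt ℝ φ x) ∧
    (∀ x : ℝ, DifferentiableAt ℝ (deriv φ) x) ∧
    (∀ x : ℝ, deriv (deriv φ) x = (-2 * p x / (lam * σ) + 1 / σ ^ 2) * φ x) := by
  have hσ' : σ ≠ 0 := ne_of_gt hσ
  set f : ℝ → ℝ := fun y => p y * Real.exp (y / σ) * φ y with hf_def
  set g : ℝ → ℝ := fun y => p y * Real.exp (-y / σ) * φ y with hg_def
  have hf_cont : Continuous f := by fun_prop
  have hg_cont : Continuous g := by fun_prop
  -- integrability of f on Iic x
  have hfI : ∀ x : ℝ, IntegrableOn f (Iic x) := by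
    intro x
    refine Integrable.mono' ((hφ_int.const_mul (Real.exp (x / σ))).restrict)
      hf_cont.aestronglyMeasurable.restrict ?_
    filter_upwards [ae_restrict_mem measurableSet_Iic] with y hy
    have h1 : Real.exp (y / σ) ≤ Real.exp (x / σ) := by
      apply Real.exp_le_exp.mpr; gcongr
      exact hy
    have h2 : (0:ℝ) ≤ p y * |φ y| := mul_nonneg (hp_nonneg y) (abs_nonneg _)
    have : |f y| = p y * Real.exp (y / σ) * |φ y| := by
      rw [hf_def]; simp only [abs_mul, abs_of_nonneg (hp_nonneg y),
        abs_of_nonneg (Real.exp_nonneg _)]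
    rw [Real.norm_eq_abs, this]
    calc p y * Real.exp (y / σ) * |φ y| = Real.exp (y / σ) * (p y * |φ y|) := by ring
      _ ≤ Real.exp (x / σ) * (p y * |φ y|) := mul_le_mul_of_nonneg_right h1 h2
  -- integrability of g on Ioi x
  have hgI : ∀ x : ℝ, IntegrableOn g (Ioi x) := by
    intro x
    refine Integrable.mono' ((hφ_int.const_mul (Real.exp (-x / σ))).restrict)
      hg_cont.aestronglyMeasurable.restrict ?_
    filter_upwards [ae_restrict_mem measurableSet_Ioi] with y hy
    have h1 : Real.exp (-y / σ) ≤ Real.exp (-x / σ) := by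
      apply Real.exp_le_exp.mpr; gcongr
      exact le_of_lt hy
    have : |g y| = p y * Real.exp (-y / σ) * |φ y| := by
      rw [hg_def]; simp only [abs_mul, abs_of_nonneg (hp_nonneg y),
        abs_of_nonneg (Real.exp_nonneg _)]
    rw [Real.norm_eq_abs, this]
    have h2 : (0:ℝ) ≤ p y * |φ y| := mul_nonneg (hp_nonneg y) (abs_nonneg _)
    calc p y * Real.exp (-y / σ) * |φ y| = Real.exp (-y / σ) * (p y * |φ y|) := by ring
      _ ≤ Real.exp (-x / σ) * (p y * |φ y|) := mul_le_mul_of_nonneg_right h1 h2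
  -- splitting the eigen-integral
  have hsplit : ∀ x : ℝ, lam * φ x =
      Real.exp (-x / σ) * (∫ y in Iic x, f y) + Real.exp (x / σ) * (∫ y in Ioi x, g y) := by
    intro x
    set k : ℝ → ℝ := fun y => p y * Real.exp (-|x - y| / σ) * φ y with hk_def
    have hk_cont : Continuous k := by fun_prop
    have hkI : Integrable k := by
      refine Integrable.mono' hφ_int hk_cont.aestronglyMeasurable ?_
      filter_upwards with y
      have h1 : Real.exp (-|x - y| / σ) ≤ 1 := by
        rw [← Real.exp_zero]
        apply Real.exp_le_exp.mpr
        apply div_nonpos_of_nonpos_of_nonneg (neg_nonpos.mpr (abs_nonneg _)) (le_of_lt hσ)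
      have : |k y| = p y * Real.exp (-|x - y| / σ) * |φ y| := by
        rw [hk_def]; simp only [abs_mul, abs_of_nonneg (hp_nonneg y),
          abs_of_nonneg (Real.exp_nonneg _)]
      rw [Real.norm_eq_abs, this]
      have h2 : (0:ℝ) ≤ p y * |φ y| := mul_nonneg (hp_nonneg y) (abs_nonneg _)
      calc p y * Real.exp (-|x - y| / σ) * |φ y|
          = Real.exp (-|x - y| / σ) * (p y * |φ y|) := by ring
        _ ≤ 1 * (p y * |φ y|) := mul_le_mul_of_nonneg_right h1 h2
        _ = p y * |φ y| := one_mul _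
    rw [heig x, ← intervalIntegral.integral_Iic_add_Ioi hkI.integrableOn hkI.integrableOn]
    have hleft : ∫ y in Iic x, k y = Real.exp (-x / σ) * ∫ y in Iic x, f y := by
      rw [← integral_const_mul]
      apply setIntegral_congr_fun measurableSet_Iic
      intro y hy
      simp only [hk_def, hf_def]
      rw [abs_of_nonneg (sub_nonneg.mpr hy)]
      rw [show -(x - y) / σ = -x / σ + y / σ by ring, Real.exp_add]
      ring
    have hright : ∫ y in Ioi x, k y = Real.exp (x / σ) * ∫ y in Ioi x, g y := by
      rw [← integral_const_mul]
      apply setIntegral_congr_fun measurableSet_Ioi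
      intro y hy
      simp only [hk_def, hg_def]
      rw [abs_sub_comm, abs_of_nonneg (sub_nonneg.mpr (le_of_lt hy))]
      rw [show -(y - x) / σ = x / σ + -y / σ by ring, Real.exp_add]
      ring
    rw [hleft, hright]
  -- antiderivative versions
  set F : ℝ → ℝ := fun x => (∫ y in Iic 0, f y) + ∫ t in (0:ℝ)..x, f t with hF_def
  set G : ℝ → ℝ := fun x => (∫ y in Ioi 0, g y) - ∫ t in (0:ℝ)..x, g t with hG_def
  have hFeq : ∀ x : ℝ, F x = ∫ y in Iic x, f y := by
    intro x
    have h := intervalIntegral.integral_Iic_sub_Iic (μ := volume) (hfI 0) (hfI x)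
    simp only [hF_def]
    linarith
  have hGeq : ∀ x : ℝ, G x = ∫ y in Ioi x, g y := by
    intro x
    have h := my_integral_Ioi_sub_Ioi (hgI 0) (hgI x)
    simp only [hG_def]
    linarith
  have hFd : ∀ x : ℝ, HasDerivAt F (f x) x := by
    intro x
    have := (intervalIntegral.integral_hasDerivAt_right
      (hf_cont.intervalIntegrable 0 x)
      (hf_cont.stronglyMeasurableAtFilter volume (nhds x)) hf_cont.continuousAt)
    have h2 := (hasDerivAt_const x (∫ y in Iic 0, f y)).add this
    rw [zero_add] at h2
    exact h2
  have hGd : ∀ x : ℝ, HasDerivAt G (-(g x)) x := by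
    intro x
    have := (intervalIntegral.integral_hasDerivAt_right
      (hg_cont.intervalIntegrable 0 x)
      (hg_cont.stronglyMeasurableAtFilter volume (nhds x)) hg_cont.continuousAt)
    have h2 := (hasDerivAt_const x (∫ y in Ioi 0, g y)).sub this
    rw [zero_sub] at h2
    exact h2
  have hφ_eq : ∀ x : ℝ, φ x = (Real.exp (-x / σ) * F x + Real.exp (x / σ) * G x) / lam := by
    intro x
    rw [hFeq, hGeq, ← hsplit x]
    field_simp
  -- derivative building blocks
  have e1 : ∀ x : ℝ, HasDerivAt (fun x : ℝ => Real.exp (-x / σ)) (Real.exp (-x / σ) * (-1 / σ)) x := by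
    intro x
    exact HasDerivAt.exp (((hasDerivAt_id x).neg).div_const σ)
  have e2 : ∀ x : ℝ, HasDerivAt (fun x : ℝ => Real.exp (x / σ)) (Real.exp (x / σ) * (1 / σ)) x := by
    intro x
    have := HasDerivAt.exp ((hasDerivAt_id x).div_const σ)
    simpa using this
  have hE : ∀ x : ℝ, Real.exp (-x / σ) * Real.exp (x / σ) = 1 := by
    intro x; rw [← Real.exp_add]; ring_nf; exact Real.exp_zero
  set D : ℝ → ℝ := fun x =>
      (Real.exp (x / σ) * G x - Real.exp (-x / σ) * F x) / (lam * σ) with hD_def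
  have hφd : ∀ x : ℝ, HasDerivAt φ (D x) x := by
    intro x
    have hH : HasDerivAt (fun x => (Real.exp (-x / σ) * F x + Real.exp (x / σ) * G x) / lam)
        (D x) x := by
      have h := (((e1 x).mul (hFd x)).add ((e2 x).mul (hGd x))).div_const lam
      refine h.congr_deriv (Eq.symm ?_)
      simp only [hD_def, hf_def, hg_def]
      have := hE x
      field_simp
      nlinarith [hE x, this]
    have : φ = fun x => (Real.exp (-x / σ) * F x + Real.exp (x / σ) * G x) / lam :=
      funext hφ_eq
    rw [this]
    exact hH
  have hφ_deriv : deriv φ = D := funext fun x => (hφd x).deriv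
  have hDd : ∀ x : ℝ, HasDerivAt D ((-2 * p x / (lam * σ) + 1 / σ ^ 2) * φ x) x := by
    intro x
    have h := (((e2 x).mul (hGd x)).sub ((e1 x).mul (hFd x))).div_const (lam * σ)
    refine h.congr_deriv (Eq.symm ?_)
    have hsum : Real.exp (-x / σ) * F x + Real.exp (x / σ) * G x = lam * φ x := by
      rw [hφ_eq x]; field_simp
    simp only [hf_def, hg_def]
    linear_combination (-(1:ℝ)/(lam*σ^2)) * hsum + (2*p x*φ x/(lam*σ)) * hE x + ((-(1:ℝ)/σ^2) * φ x) * (mul_inv_cancel₀ hlam)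
  refine ⟨fun x => (hφd x).differentiableAt, ?_, ?_⟩
  · intro x; rw [hφ_deriv]; exact (hDd x).differentiableAt
  · intro x; rw [hφ_deriv]; exact (hDd x).deriv
end

section
/- Let σ > 0, p : ℝ → ℝ nonnegative measurable, λ ≠ 0, and φ : ℝ → ℝ measurable with ∫_ℝ p(y)|φ(y)| dy < ∞. If λ φ(x) = ∫_ℝ p(y) exp(−|x−y|/σ) φ(y) dy for all x ∈ ℝ, then φ(x) → 0 as |x| → ∞. -/
open MeasureTheory Real Filter Topology

/-!
Dividing the eigen-equation by `λ` exhibits `φ` as `λ⁻¹` times the integral of the kernel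
`exp (-|x - y| / σ)` against the integrable function `p φ`. The kernel is bounded by `1` and, for
each fixed `y`, tends to `0` as `|x| → ∞`, so dominated convergence makes the integral, hence `φ`,
tend to `0`.
-/

theorem isCountablyGenerated_cocompact_of_proper (X : Type*) [PseudoMetricSpace X]
    [ProperSpace X] : (cocompact X).IsCountablyGenerated := by
  rcases isEmpty_or_nonempty X with _ | ⟨⟨x₀⟩⟩
  · rw [cocompact_eq_bot]
    infer_instance
  · rw [← comap_dist_left_atTop_eq_cocompact x₀]
    infer_instance

theorem tendsto_integral_mul_of_tendsto_zero {α β : Type*} [MeasurableSpace β] {μ : Measure β}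
    {l : Filter α} [l.IsCountablyGenerated] {K : α → β → ℝ} {g : β → ℝ} {C : ℝ}
    (hK_meas : ∀ x, AEStronglyMeasurable (K x) μ) (hK_bound : ∀ x y, |K x y| ≤ C)
    (hK_lim : ∀ y, Tendsto (K · y) l (𝓝 0)) (hg : Integrable g μ) :
    Tendsto (fun x => ∫ y, K x y * g y ∂μ) l (𝓝 0) := by
  have hbound : ∀ x y, ‖K x y * g y‖ ≤ C * ‖g y‖ := fun x y => by
    rw [norm_mul]
    exact mul_le_mul_of_nonneg_right (hK_bound x y) (norm_nonneg _)
  simpa only [zero_mul, integral_zero] using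
    tendsto_integral_filter_of_dominated_convergence (fun y => C * ‖g y‖)
      (F := fun x y => K x y * g y)
      (.of_forall fun x => (hK_meas x).mul hg.aestronglyMeasurable)
      (.of_forall fun x => ae_of_all _ (hbound x)) (hg.norm.const_mul C)
      (ae_of_all _ fun y => (hK_lim y).mul_const (g y))

section LaplaceKernel

variable {X : Type*} [PseudoMetricSpace X] {σ : ℝ}

theorem abs_exp_neg_dist_div_le_one (hσ : 0 < σ) (x y : X) : |exp (-dist x y / σ)| ≤ 1 := by
  rw [abs_of_pos (exp_pos _), exp_le_one_iff, neg_div, neg_nonpos]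
  exact div_nonneg dist_nonneg hσ.le

theorem tendsto_exp_neg_dist_div_cocompact [ProperSpace X] (hσ : 0 < σ) (y : X) :
    Tendsto (fun x => exp (-dist x y / σ)) (cocompact X) (𝓝 0) := by
  have h := (tendsto_dist_right_cocompact_atTop y).atTop_div_const hσ
  simp_rw [neg_div]
  exact tendsto_exp_atBot.comp (tendsto_neg_atTop_atBot.comp h)

theorem tendsto_integral_exp_neg_dist_mul_cocompact [ProperSpace X] [MeasurableSpace X]
    [OpensMeasurableSpace X] {μ : Measure X} (hσ : 0 < σ) {g : X → ℝ} (hg : Integrable g μ) :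
    Tendsto (fun x => ∫ y, exp (-dist x y / σ) * g y ∂μ) (cocompact X) (𝓝 0) := by
  have := isCountablyGenerated_cocompact_of_proper X
  refine tendsto_integral_mul_of_tendsto_zero (fun x => ?_) (abs_exp_neg_dist_div_le_one hσ)
    (tendsto_exp_neg_dist_div_cocompact hσ) hg
  exact (by fun_prop : Continuous fun y => exp (-dist x y / σ)).aestronglyMeasurable

end LaplaceKernel

/-- Any eigenfunction of the Laplace kernel with respect to a nonnegative
density `p` (with nonzero eigenvalue and `p·|φ|` integrable) vanishes at infinity. -/
theorem laplace_kernel_eigenfunction_tendsto_zero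
    (σ : ℝ) (hσ : 0 < σ)
    (p : ℝ → ℝ) (hp_meas : Measurable p) (hp_nonneg : ∀ x, 0 ≤ p x)
    (lam : ℝ) (hlam : lam ≠ 0)
    (φ : ℝ → ℝ) (hφ_meas : Measurable φ)
    (hφ_int : Integrable (fun y => p y * |φ y|))
    (heig : ∀ x : ℝ, lam * φ x = ∫ y : ℝ, p y * Real.exp (-|x - y| / σ) * φ y) :
    Tendsto φ (cocompact ℝ) (nhds 0) := by
  have hpφ : Integrable (fun y => p y * φ y) :=
    hφ_int.mono' (hp_meas.mul hφ_meas).aestronglyMeasurable <| ae_of_all _ fun y => by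
      rw [norm_mul, norm_of_nonneg (hp_nonneg y), norm_eq_abs]
  have hφ_eq : φ = fun x => lam⁻¹ * ∫ y, exp (-dist x y / σ) * (p y * φ y) := by
    ext x
    rw [eq_inv_mul_iff_mul_eq₀ hlam, heig]
    exact integral_congr_ae <| ae_of_all _ fun y => by simp only [dist_eq]; ring
  rw [hφ_eq]
  simpa only [mul_zero] using
    (tendsto_integral_exp_neg_dist_mul_cocompact hσ hpφ).const_mul lam⁻¹
end

section
/- Let χ > 0 and σ > 0. There exists λ₀ > 0 such that for every 0 < λ < λ₀ the equation 2 p(x)/(λσ) = 1/σ² has exactly two solutions 0 < x₁(λ) < x₂(λ) on (0,∞); moreover, defining I(λ) = ∫_{x₁(λ)}^{x₂(λ)} √(2 p(x)/(λσ) − 1/σ²) · √λ dx (equivalently I(λ) = ∫_{x₁(λ)}^{x₂(λ)} √(2 p(x)/σ − λ/σ²) dx), one has lim_{λ → 0⁺} I(λ) = ∫_0^∞ √(2 p(x)/σ) dx, which is a finite positive number. -/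
open MeasureTheory Real Filter

noncomputable def gfun (χ : ℝ) (x : ℝ) : ℝ := |x| ^ χ * Real.exp (-x ^ 2)

lemma gfun_cont {χ : ℝ} (hχ : 0 < χ) : Continuous (gfun χ) := by
  unfold gfun
  exact (continuous_abs.rpow_const fun x => Or.inr hχ.le).mul
    ((continuous_pow 2).neg.rexp)

lemma gfun_pos {χ : ℝ} {x : ℝ} (hx : 0 < x) : 0 < gfun χ x := by
  unfold gfun
  have : 0 < |x| := abs_pos.mpr hx.ne'
  positivity

lemma gfun_zero {χ : ℝ} (hχ : 0 < χ) : gfun χ 0 = 0 := by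
  simp [gfun, Real.zero_rpow hχ.ne']

lemma gfun_eq {χ : ℝ} {x : ℝ} (hx : 0 ≤ x) : gfun χ x = x ^ χ * Real.exp (-x ^ 2) := by
  rw [gfun, abs_of_nonneg hx]

lemma gfun_deriv {χ : ℝ} {x : ℝ} (hx : 0 < x) :
    HasDerivAt (gfun χ) (x ^ (χ - 1) * Real.exp (-x ^ 2) * (χ - 2 * x ^ 2)) x := by
  have h1 : HasDerivAt (fun y : ℝ => y ^ χ) (χ * x ^ (χ - 1)) x :=
    Real.hasDerivAt_rpow_const (Or.inl hx.ne')
  have h2 : HasDerivAt (fun y : ℝ => Real.exp (-y ^ 2)) (Real.exp (-x ^ 2) * -(2 * x)) x := by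
    have hp : HasDerivAt (fun y : ℝ => -y ^ 2) (-(2 * x)) x := by
      simpa using (hasDerivAt_pow 2 x).fun_neg
    exact hp.exp
  have h3 := h1.mul h2
  have hxχ : x ^ χ = x ^ (χ - 1) * x := by
    rw [← Real.rpow_add_one hx.ne', sub_add_cancel]
  have heq : χ * x ^ (χ - 1) * Real.exp (-x ^ 2) + x ^ χ * (Real.exp (-x ^ 2) * -(2 * x))
      = x ^ (χ - 1) * Real.exp (-x ^ 2) * (χ - 2 * x ^ 2) := by
    rw [hxχ]; ring
  rw [heq] at h3
  apply h3.congr_of_eventuallyEq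
  filter_upwards [lt_mem_nhds hx] with y hy
  exact gfun_eq hy.le

lemma sqrt_half_pos {χ : ℝ} (hχ : 0 < χ) : 0 < Real.sqrt (χ / 2) :=
  Real.sqrt_pos.mpr (by linarith)

lemma sq_sqrt_half {χ : ℝ} (hχ : 0 < χ) : Real.sqrt (χ / 2) ^ 2 = χ / 2 :=
  Real.sq_sqrt (by linarith)

lemma gfun_mono {χ : ℝ} (hχ : 0 < χ) :
    StrictMonoOn (gfun χ) (Set.Icc 0 (Real.sqrt (χ / 2))) := by
  apply strictMonoOn_of_deriv_pos (convex_Icc _ _) (gfun_cont hχ).continuousOn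
  rw [interior_Icc]
  intro x hx
  rw [(gfun_deriv hx.1).deriv]
  have h1 : 0 < x ^ (χ - 1) := Real.rpow_pos_of_pos hx.1 _
  have h2 : x ^ 2 < χ / 2 := by
    have := sq_sqrt_half hχ
    nlinarith [hx.1, hx.2]
  have h3 : (0:ℝ) < Real.exp (-x ^ 2) := Real.exp_pos _
  have h4 : 0 < χ - 2 * x ^ 2 := by linarith
  positivity

lemma gfun_anti {χ : ℝ} (hχ : 0 < χ) :
    StrictAntiOn (gfun χ) (Set.Ici (Real.sqrt (χ / 2))) := by
  apply strictAntiOn_of_deriv_neg (convex_Ici _) (gfun_cont hχ).continuousOn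
  rw [interior_Ici]
  intro x hx
  have hx0 : 0 < x := lt_trans (sqrt_half_pos hχ) hx
  rw [(gfun_deriv hx0).deriv]
  have h1 : 0 < x ^ (χ - 1) := Real.rpow_pos_of_pos hx0 _
  have h2 : χ / 2 < x ^ 2 := by
    have := sq_sqrt_half hχ
    nlinarith [sqrt_half_pos hχ, Set.mem_Ioi.mp hx]
  have h3 : (0:ℝ) < Real.exp (-x ^ 2) := Real.exp_pos _
  have h4 : χ - 2 * x ^ 2 < 0 := by linarith
  have h5 : 0 < x ^ (χ - 1) * Real.exp (-x ^ 2) := by positivity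
  nlinarith

lemma gfun_tendsto {χ : ℝ} (hχ : 0 < χ) : Tendsto (gfun χ) atTop (nhds 0) := by
  have h := rpow_mul_exp_neg_mul_sq_isLittleO_exp_neg one_pos χ
  have h2 : Tendsto (fun x : ℝ => Real.exp (-(1 / 2) * x)) atTop (nhds 0) := by
    have : Tendsto (fun x : ℝ => -(1 / 2) * x) atTop atBot :=
      tendsto_id.const_mul_atTop_of_neg (by norm_num)
    exact Real.tendsto_exp_atBot.comp this
  have h3 := h.isBigO.trans_tendsto h2
  apply h3.congr'
  filter_upwards [eventually_ge_atTop (0:ℝ)] with x hx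
  rw [gfun_eq hx]; ring_nf

lemma gfun_roots {χ : ℝ} (hχ : 0 < χ) {c : ℝ} (hc0 : 0 < c)
    (hcm : c < gfun χ (Real.sqrt (χ / 2))) :
    ∃ a b : ℝ, 0 < a ∧ a < Real.sqrt (χ / 2) ∧ Real.sqrt (χ / 2) < b ∧
      gfun χ a = c ∧ gfun χ b = c := by
  set m := Real.sqrt (χ / 2) with hm
  have hm0 : 0 < m := sqrt_half_pos hχ
  have hc1 : c ∈ Set.Ioo (gfun χ 0) (gfun χ m) := by
    rw [gfun_zero hχ]; exact ⟨hc0, hcm⟩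
  obtain ⟨a, ha, hga⟩ := intermediate_value_Ioo hm0.le (gfun_cont hχ).continuousOn hc1
  obtain ⟨B, hBm, hBc⟩ : ∃ B, m < B ∧ gfun χ B < c := by
    obtain ⟨B, h1, h2⟩ := ((gfun_tendsto hχ).eventually_lt_const hc0).and
      (eventually_gt_atTop m) |>.exists
    exact ⟨B, h2, h1⟩
  obtain ⟨b, hb, hgb⟩ := intermediate_value_Ioo' hBm.le (gfun_cont hχ).continuousOn
    (Set.mem_Ioo.mpr ⟨hBc, hcm⟩)
  exact ⟨a, b, ha.1, ha.2, hb.1, hga, hgb⟩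

/-- The data density `p(x) = |x|^χ e^{-x²} / Γ((1+χ)/2)`. -/
noncomputable def dataDensity (χ : ℝ) (x : ℝ) : ℝ :=
  |x| ^ χ * Real.exp (-x ^ 2) / Real.Gamma ((1 + χ) / 2)

lemma dataDensity_eq (χ x : ℝ) :
    dataDensity χ x = gfun χ x / Real.Gamma ((1 + χ) / 2) := rfl


/-- For `χ > 0` and small `λ > 0` the equation `2p(x)/(λσ) = 1/σ²` has
exactly two positive roots `x₁(λ) < x₂(λ)`, and the WKB phase integral
`I(λ) = ∫_{x₁(λ)}^{x₂(λ)} √(2p(x)/σ − λ/σ²) dx` converges, as `λ → 0⁺`, to the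
finite positive number `∫_0^∞ √(2p(x)/σ) dx`. -/
theorem wkb_phase_integral_limit
    (χ σ : ℝ) (hχ : 0 < χ) (hσ : 0 < σ) :
    ∃ lam₀ : ℝ, 0 < lam₀ ∧ ∃ x₁ x₂ : ℝ → ℝ,
      (∀ lam : ℝ, 0 < lam → lam < lam₀ →
        0 < x₁ lam ∧ x₁ lam < x₂ lam ∧
        {x : ℝ | 0 < x ∧ 2 * dataDensity χ x / (lam * σ) = 1 / σ ^ 2}
          = {x₁ lam, x₂ lam}) ∧
      IntegrableOn (fun x => Real.sqrt (2 * dataDensity χ x / σ)) (Set.Ioi 0) ∧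
      (0 < ∫ x in Set.Ioi 0, Real.sqrt (2 * dataDensity χ x / σ)) ∧
      Tendsto
        (fun lam => ∫ x in (x₁ lam)..(x₂ lam),
          Real.sqrt (2 * dataDensity χ x / σ - lam / σ ^ 2))
        (nhdsWithin 0 (Set.Ioi 0))
        (nhds (∫ x in Set.Ioi 0, Real.sqrt (2 * dataDensity χ x / σ))) := by
  have hΓ : 0 < Real.Gamma ((1 + χ) / 2) := Real.Gamma_pos_of_pos (by linarith)
  set Γv := Real.Gamma ((1 + χ) / 2) with hΓv
  set m := Real.sqrt (χ / 2) with hmdef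
  have hm0 : 0 < m := sqrt_half_pos hχ
  have hgm : 0 < gfun χ m := gfun_pos hm0
  set c : ℝ → ℝ := fun lam => lam * Γv / (2 * σ) with hcdef
  set lam₀ : ℝ := 2 * σ * gfun χ m / Γv with hlamdef
  have hlam₀ : 0 < lam₀ := by positivity
  have hcpos : ∀ lam : ℝ, 0 < lam → 0 < c lam := fun lam h => by positivity
  have hclt : ∀ lam : ℝ, 0 < lam → lam < lam₀ → c lam < gfun χ m := by
    intro lam h1 h2
    rw [hlamdef, lt_div_iff₀ hΓ] at h2
    rw [hcdef]
    rw [div_lt_iff₀ (by positivity : (0:ℝ) < 2 * σ)]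
    nlinarith
  have key : ∀ lam : ℝ, ∃ ab : ℝ × ℝ, 0 < lam → lam < lam₀ →
      0 < ab.1 ∧ ab.1 < m ∧ m < ab.2 ∧ gfun χ ab.1 = c lam ∧ gfun χ ab.2 = c lam := by
    intro lam
    by_cases h : 0 < lam ∧ lam < lam₀
    · obtain ⟨a, b, h1, h2, h3, h4, h5⟩ :=
        gfun_roots hχ (hcpos lam h.1) (hclt lam h.1 h.2)
      exact ⟨(a, b), fun _ _ => ⟨h1, h2, h3, h4, h5⟩⟩
    · exact ⟨(1, 2), fun h1 h2 => absurd ⟨h1, h2⟩ h⟩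
  choose ab hab using key
  -- the key equivalence between the equation and gfun = c
  have heqv : ∀ lam : ℝ, 0 < lam → ∀ x : ℝ,
      (2 * dataDensity χ x / (lam * σ) = 1 / σ ^ 2) ↔ gfun χ x = c lam := by
    intro lam hlam x
    rw [dataDensity_eq, hcdef]
    rw [div_eq_div_iff (by positivity) (by positivity)]
    rw [eq_div_iff (by positivity : (2 : ℝ) * σ ≠ 0)]
    constructor
    · intro h
      have hσ' : σ ≠ 0 := hσ.ne'
      have hΓ' : Γv ≠ 0 := hΓ.ne'
      field_simp at h ⊢
      nlinarith [h]
    · intro h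
      field_simp at h ⊢
      nlinarith [h]
  refine ⟨lam₀, hlam₀, fun lam => (ab lam).1, fun lam => (ab lam).2, ?_, ?_⟩
  · intro lam h1 h2
    obtain ⟨ha0, ham, hmb, hga, hgb⟩ := hab lam h1 h2
    refine ⟨ha0, ham.trans hmb, ?_⟩
    ext x
    simp only [Set.mem_setOf_eq, Set.mem_insert_iff, Set.mem_singleton_iff]
    constructor
    · rintro ⟨hx, heq⟩
      have hgx : gfun χ x = c lam := (heqv lam h1 x).mp heq
      rcases le_or_gt x m with hxm | hxm
      · left
        exact (gfun_mono hχ).injOn ⟨hx.le, hxm⟩ ⟨ha0.le, ham.le⟩ (hgx.trans hga.symm)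
      · right
        exact (gfun_anti hχ).injOn (Set.mem_Ici.mpr hxm.le) (Set.mem_Ici.mpr hmb.le)
          (hgx.trans hgb.symm)
    · rintro (rfl | rfl)
      · exact ⟨ha0, (heqv lam h1 _).mpr hga⟩
      · exact ⟨hm0.trans hmb, (heqv lam h1 _).mpr hgb⟩
  -- the remaining three statements
  have hF_eq : ∀ x ∈ Set.Ioi (0:ℝ), Real.sqrt (2 * dataDensity χ x / σ)
      = Real.sqrt (2 / (σ * Γv)) * (x ^ (χ / 2) * Real.exp (-(1 / 2) * x ^ 2)) := by
    intro x hx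
    have hx0 : (0:ℝ) < x := hx
    rw [dataDensity_eq, gfun_eq hx0.le]
    rw [show 2 * (x ^ χ * Real.exp (-x ^ 2) / Γv) / σ
        = (2 / (σ * Γv)) * (x ^ χ * Real.exp (-x ^ 2)) by field_simp]
    rw [Real.sqrt_mul (by positivity), Real.sqrt_mul (by positivity : (0:ℝ) ≤ x ^ χ)]
    congr 1
    congr 1
    · rw [Real.sqrt_eq_rpow, ← Real.rpow_mul hx0.le]
      ring_nf
    · rw [← Real.exp_half]
      congr 1
      ring
  have hIntF : IntegrableOn (fun x => Real.sqrt (2 * dataDensity χ x / σ)) (Set.Ioi 0) := by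
    have h := integrableOn_rpow_mul_exp_neg_mul_sq (by norm_num : (0:ℝ) < 1/2)
      (s := χ / 2) (by linarith)
    exact MeasureTheory.IntegrableOn.congr_fun (h.const_mul (Real.sqrt (2 / (σ * Γv))))
      (fun x hx => (hF_eq x hx).symm) measurableSet_Ioi
  have hp_cont : Continuous (dataDensity χ) := by
    have : Continuous fun x => gfun χ x / Γv := (gfun_cont hχ).div_const _
    exact this
  have hFl_cont : ∀ lam : ℝ,
      Continuous (fun x => Real.sqrt (2 * dataDensity χ x / σ - lam / σ ^ 2)) := fun lam =>
    ((((continuous_const.mul hp_cont)).div_const σ).sub continuous_const).sqrt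
  have hgood : ∀ᶠ lam in nhdsWithin (0:ℝ) (Set.Ioi 0), 0 < lam ∧ lam < lam₀ := by
    filter_upwards [Ioo_mem_nhdsGT_of_mem (Set.left_mem_Ico.mpr hlam₀)] with lam hlam
    exact ⟨hlam.1, hlam.2⟩
  have hc_tendsto : Tendsto c (nhdsWithin (0:ℝ) (Set.Ioi 0)) (nhds 0) := by
    have hco : Continuous c := (continuous_id.mul continuous_const).div_const _
    have h0 : c 0 = 0 := by simp [hcdef]
    have ht : Tendsto c (nhds 0) (nhds (c 0)) := hco.tendsto 0
    rw [h0] at ht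
    exact ht.mono_left nhdsWithin_le_nhds
  refine ⟨hIntF, ?_, ?_⟩
  · rw [setIntegral_pos_iff_support_of_nonneg_ae
      (Filter.Eventually.of_forall fun x => Real.sqrt_nonneg _) hIntF]
    have hsub : Set.Ioi (0:ℝ) ⊆ Function.support fun x => Real.sqrt (2 * dataDensity χ x / σ) := by
      intro x hx
      have hx0 : (0:ℝ) < x := hx
      have : 0 < 2 * dataDensity χ x / σ := by
        rw [dataDensity_eq]
        have hgx : 0 < gfun χ x := gfun_pos hx0
        positivity
      exact (Real.sqrt_pos.mpr this).ne'
    rw [Set.inter_eq_right.mpr hsub]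
    simp [Real.volume_Ioi]
  · have hEq : ∀ᶠ lam in nhdsWithin (0:ℝ) (Set.Ioi 0),
        (∫ x in (ab lam).1..(ab lam).2, Real.sqrt (2 * dataDensity χ x / σ - lam / σ ^ 2))
        = ∫ x in Set.Ioi 0, Set.indicator (Set.Ioc (ab lam).1 (ab lam).2)
            (fun x => Real.sqrt (2 * dataDensity χ x / σ - lam / σ ^ 2)) x := by
      filter_upwards [hgood] with lam hlam
      obtain ⟨ha0, ham, hmb, _, _⟩ := hab lam hlam.1 hlam.2
      rw [intervalIntegral.integral_of_le (ham.trans hmb).le]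
      rw [MeasureTheory.setIntegral_indicator measurableSet_Ioc]
      rw [show Set.Ioi (0:ℝ) ∩ Set.Ioc (ab lam).1 (ab lam).2 = Set.Ioc (ab lam).1 (ab lam).2
        from Set.inter_eq_right.mpr (fun y hy => lt_trans ha0 hy.1)]
    refine Tendsto.congr' (by filter_upwards [hEq] with lam h using h.symm) ?_
    apply MeasureTheory.tendsto_integral_filter_of_dominated_convergence
      (fun x => Real.sqrt (2 * dataDensity χ x / σ))
    · exact Filter.Eventually.of_forall fun lam =>
        ((hFl_cont lam).aestronglyMeasurable).indicator measurableSet_Ioc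
    · filter_upwards [hgood] with lam hlam
      refine Filter.Eventually.of_forall fun x => ?_
      rw [Real.norm_eq_abs]
      by_cases hx : x ∈ Set.Ioc (ab lam).1 (ab lam).2
      · rw [Set.indicator_of_mem hx, abs_of_nonneg (Real.sqrt_nonneg _)]
        apply Real.sqrt_le_sqrt
        have h0 : 0 ≤ lam / σ ^ 2 := div_nonneg hlam.1.le (sq_nonneg σ)
        linarith
      · rw [Set.indicator_of_notMem hx]
        simpa using Real.sqrt_nonneg _
    · exact hIntF
    · rw [ae_restrict_iff' measurableSet_Ioi]
      refine Filter.Eventually.of_forall fun x hx => ?_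
      have hx0 : (0:ℝ) < x := hx
      have hmem : ∀ᶠ lam in nhdsWithin (0:ℝ) (Set.Ioi 0),
          x ∈ Set.Ioc (ab lam).1 (ab lam).2 := by
        filter_upwards [hgood, hc_tendsto.eventually_lt_const (gfun_pos hx0)] with lam hlam hclt
        obtain ⟨ha0, ham, hmb, hga, hgb⟩ := hab lam hlam.1 hlam.2
        constructor
        · by_contra hcon
          push_neg at hcon
          have := (gfun_mono hχ).monotoneOn ⟨hx0.le, hcon.trans ham.le⟩
            ⟨ha0.le, ham.le⟩ hcon
          rw [hga] at this
          linarith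
        · by_contra hcon
          push_neg at hcon
          have := (gfun_anti hχ).antitoneOn (Set.mem_Ici.mpr hmb.le)
            (Set.mem_Ici.mpr (hmb.le.trans hcon.le)) hcon.le
          rw [hgb] at this
          linarith
      have hFl_tendsto : Tendsto
          (fun lam => Real.sqrt (2 * dataDensity χ x / σ - lam / σ ^ 2))
          (nhdsWithin (0:ℝ) (Set.Ioi 0))
          (nhds (Real.sqrt (2 * dataDensity χ x / σ))) := by
        have hco : Continuous (fun lam : ℝ => Real.sqrt (2 * dataDensity χ x / σ - lam / σ ^ 2)) :=
          (continuous_const.sub (continuous_id.div_const _)).sqrt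
        have := (hco.tendsto 0).mono_left (nhdsWithin_le_nhds
          (s := Set.Ioi (0:ℝ)))
        simpa using this
      refine hFl_tendsto.congr' ?_
      filter_upwards [hmem] with lam hm
      exact (Set.indicator_of_mem hm
        (fun x => Real.sqrt (2 * dataDensity χ x / σ - lam / σ ^ 2))).symm
end

section
/- Let χ > 0 and σ > 0, and for small λ > 0 let x₁(λ) < x₂(λ) be the two positive roots of 2p(x)/(λσ) = 1/σ², and let I(λ) = ∫_{x₁(λ)}^{x₂(λ)} √(2 p(x)/σ − λ/σ²) dx. Suppose (λ_ρ)_{ρ ≥ 1} is a sequence of positive reals converging to 0 such that for every sufficiently large ρ there exists θ_ρ ∈ [−π/2, π/2] with λ_ρ = ( I(λ_ρ) / (θ_ρ + (ρ−1)π/2) )². Then there exist constants 0 < c ≤ C and ρ₀ such that for all ρ ≥ ρ₀, c ρ^{−2} ≤ λ_ρ ≤ C ρ^{−2}. -/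
open MeasureTheory Real Filter

lemma dataDensity_continuous {χ : ℝ} (hχ : 0 < χ) : Continuous (dataDensity χ) := by
  have h1 : Continuous fun x : ℝ => |x| ^ χ :=
    continuous_abs.rpow_const (fun x => Or.inr hχ.le)
  have h2 : Continuous fun x : ℝ => Real.exp (-x ^ 2) :=
    Real.continuous_exp.comp (continuous_pow 2).neg
  exact (h1.mul h2).div_const _

lemma dataDensity_pos {χ : ℝ} (hχ : 0 < χ) {x : ℝ} (hx : x ≠ 0) : 0 < dataDensity χ x := by
  unfold dataDensity
  exact div_pos (mul_pos (Real.rpow_pos_of_pos (abs_pos.mpr hx) χ) (Real.exp_pos _))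
    (Real.Gamma_pos_of_pos (by linarith))

lemma dataDensity_zero {χ : ℝ} (hχ : 0 < χ) : dataDensity χ 0 = 0 := by
  unfold dataDensity
  rw [abs_zero, Real.zero_rpow hχ.ne']
  simp

lemma dataDensity_tendsto {χ : ℝ} (hχ : 0 < χ) :
    Tendsto (dataDensity χ) atTop (nhds 0) := by
  have key : ∀ x : ℝ, dataDensity χ x
      = ((x ^ 2) ^ (χ / 2) * Real.exp (-1 * x ^ 2)) / Real.Gamma ((1 + χ) / 2) := by
    intro x
    unfold dataDensity
    have h1 : (x ^ 2) ^ (χ / 2) = |x| ^ χ := by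
      rw [← sq_abs x, ← Real.rpow_natCast |x| 2, ← Real.rpow_mul (abs_nonneg x)]
      norm_num
      rw [mul_div_cancel₀ _ (two_ne_zero)]
    rw [h1]
    ring_nf
  have h := ((tendsto_rpow_mul_exp_neg_mul_atTop_nhds_zero (χ / 2) 1 one_pos).comp
    (tendsto_pow_atTop (two_ne_zero))).div_const (Real.Gamma ((1 + χ) / 2))
  rw [zero_div] at h
  exact h.congr (fun x => (key x).symm)

/-- If a sequence of eigenvalues `λ_ρ → 0⁺` satisfies the WKB
self-consistency relation `λ_ρ = (I(λ_ρ)/(θ_ρ + (ρ−1)π/2))²` with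
`θ_ρ ∈ [−π/2, π/2]`, where `I(λ)` is the WKB phase integral between the two
positive turning points `x₁(λ) < x₂(λ)`, then `λ_ρ ≍ ρ^{−2}`. -/
theorem eigenvalue_scaling_from_self_consistency
    (χ σ : ℝ) (hχ : 0 < χ) (hσ : 0 < σ)
    (lam₀ : ℝ) (hlam₀ : 0 < lam₀) (x₁ x₂ : ℝ → ℝ)
    (hroots : ∀ lam : ℝ, 0 < lam → lam < lam₀ →
      0 < x₁ lam ∧ x₁ lam < x₂ lam ∧
      {x : ℝ | 0 < x ∧ 2 * dataDensity χ x / (lam * σ) = 1 / σ ^ 2}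
        = {x₁ lam, x₂ lam})
    (lam : ℕ → ℝ) (hpos : ∀ ρ, 0 < lam ρ)
    (hto0 : Tendsto lam atTop (nhds 0))
    (hsc : ∀ᶠ ρ : ℕ in atTop, ∃ θ ∈ Set.Icc (-(Real.pi / 2)) (Real.pi / 2),
      lam ρ = ((∫ x in (x₁ (lam ρ))..(x₂ (lam ρ)),
          Real.sqrt (2 * dataDensity χ x / σ - lam ρ / σ ^ 2))
        / (θ + ((ρ : ℝ) - 1) * Real.pi / 2)) ^ 2) :
    ∃ c C : ℝ, 0 < c ∧ c ≤ C ∧ ∃ ρ₀ : ℕ, ∀ ρ : ℕ, ρ₀ ≤ ρ →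
      c * (ρ : ℝ) ^ (-2 : ℤ) ≤ lam ρ ∧ lam ρ ≤ C * (ρ : ℝ) ^ (-2 : ℤ) := by
  have hπ := Real.pi_pos
  set Γc := Real.Gamma ((1 + χ) / 2) with hΓc_def
  have hΓpos : 0 < Γc := Real.Gamma_pos_of_pos (by linarith)
  -- minimum of the density on [3/4, 5/4]
  obtain ⟨x₀, hx₀mem, hx₀min⟩ :=
    (isCompact_Icc : IsCompact (Set.Icc (3/4:ℝ) (5/4))).exists_isMinOn
      ⟨(3/4 : ℝ), by constructor <;> norm_num⟩
      ((dataDensity_continuous hχ).continuousOn)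
  set m := dataDensity χ x₀ with hm_def
  have hx₀pos : (0:ℝ) < x₀ := lt_of_lt_of_le (by norm_num) hx₀mem.1
  have hm : 0 < m := dataDensity_pos hχ hx₀pos.ne'
  have hmle : ∀ x ∈ Set.Icc (3/4:ℝ) (5/4), m ≤ dataDensity χ x := fun x hx => hx₀min hx
  set lamS := min lam₀ (σ * m) with hlamS_def
  have hlamS : 0 < lamS := lt_min hlam₀ (mul_pos hσ hm)
  -- location of the turning points for small λ
  have hroot : ∀ l : ℝ, 0 < l → l < lamS → x₁ l ≤ 3/4 ∧ 5/4 ≤ x₂ l := by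
    intro l hl hl2
    obtain ⟨h1, h12, hset⟩ := hroots l hl (hl2.trans_le (min_le_left _ _))
    have hlσm : l < σ * m := hl2.trans_le (min_le_right _ _)
    have hlm : l / (2 * σ) < m := by
      rw [div_lt_iff₀ (by positivity)]; nlinarith
    have hl2σ : 0 < l / (2 * σ) := by positivity
    have hchar : ∀ x : ℝ, 0 < x → dataDensity χ x = l / (2 * σ) →
        x = x₁ l ∨ x = x₂ l := by
      intro x hx hpx
      have hmem : x ∈ {x : ℝ | 0 < x ∧ 2 * dataDensity χ x / (l * σ) = 1 / σ ^ 2} := by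
        refine ⟨hx, ?_⟩
        rw [hpx]
        field_simp
      rw [hset] at hmem
      exact hmem
    -- a root at or below 3/4
    have hIVT := intermediate_value_Icc (by norm_num : (0:ℝ) ≤ 3/4)
      ((dataDensity_continuous hχ).continuousOn)
    have hmem : l / (2*σ) ∈ Set.Icc (dataDensity χ 0) (dataDensity χ (3/4)) := by
      constructor
      · rw [dataDensity_zero hχ]; exact hl2σ.le
      · exact le_trans hlm.le (hmle _ ⟨le_refl _, by norm_num⟩)
    obtain ⟨a, haI, hpa⟩ := hIVT hmem
    have ha0 : 0 < a := by
      rcases haI.1.lt_or_eq with h | h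
      · exact h
      · exfalso
        rw [← h, dataDensity_zero hχ] at hpa
        exact absurd hpa.symm (ne_of_gt hl2σ)
    -- a root at or above 5/4
    obtain ⟨M, hM⟩ := Filter.eventually_atTop.mp
      ((dataDensity_tendsto hχ).eventually_lt_const hl2σ)
    set M' := max M (5/4 : ℝ) with hM'_def
    have hM'54 : (5/4 : ℝ) ≤ M' := le_max_right _ _
    have hIVT' := intermediate_value_Icc' hM'54
      ((dataDensity_continuous hχ).continuousOn)
    have hmem' : l / (2*σ) ∈ Set.Icc (dataDensity χ M') (dataDensity χ (5/4)) := by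
      constructor
      · exact (hM M' (le_max_left _ _)).le
      · exact le_trans hlm.le (hmle _ ⟨by norm_num, le_refl _⟩)
    obtain ⟨b, hbI, hpb⟩ := hIVT' hmem'
    have hb0 : 0 < b := lt_of_lt_of_le (by norm_num) hbI.1
    rcases hchar a ha0 hpa with ha | ha <;> rcases hchar b hb0 hpb with hb | hb <;>
      exact ⟨by linarith [haI.2, hbI.1], by linarith [haI.2, hbI.1]⟩
  -- the comparison function for the upper bound
  set K := Real.sqrt (2 / (σ * Γc)) with hK_def
  set g : ℝ → ℝ := fun x => K * (x ^ (χ/2) * Real.exp (-(1/2) * x ^ 2)) with hg_def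
  have hgint : IntegrableOn g (Set.Ioi (0:ℝ)) :=
    (integrableOn_rpow_mul_exp_neg_mul_sq (by norm_num) (by linarith : (-1:ℝ) < χ/2)).const_mul K
  set C₁ := ∫ x in Set.Ioi (0:ℝ), g x with hC₁_def
  set c₁ := (1/2) * Real.sqrt (m / σ) with hc₁_def
  have hc₁pos : 0 < c₁ :=
    mul_pos (by norm_num) (Real.sqrt_pos.mpr (div_pos hm hσ))
  -- bounds on the phase integral
  have hIb : ∀ l : ℝ, 0 < l → l < lamS →
      c₁ ≤ (∫ x in (x₁ l)..(x₂ l), Real.sqrt (2 * dataDensity χ x / σ - l / σ ^ 2)) ∧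
      (∫ x in (x₁ l)..(x₂ l), Real.sqrt (2 * dataDensity χ x / σ - l / σ ^ 2)) ≤ C₁ := by
    intro l hl hl2
    obtain ⟨h1, h12, -⟩ := hroots l hl (hl2.trans_le (min_le_left _ _))
    obtain ⟨h34, h54⟩ := hroot l hl hl2
    have hlσm : l < σ * m := hl2.trans_le (min_le_right _ _)
    set f : ℝ → ℝ := fun x => Real.sqrt (2 * dataDensity χ x / σ - l / σ ^ 2) with hf_def
    have hfc : Continuous f :=
      (((continuous_const.mul (dataDensity_continuous hχ)).div_const σ).sub
        continuous_const).sqrt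
    have hfi : ∀ a b : ℝ, IntervalIntegrable f volume a b :=
      fun a b => hfc.intervalIntegrable a b
    have hfnn : ∀ x, 0 ≤ f x := fun x => Real.sqrt_nonneg _
    constructor
    · -- lower bound
      have hlσ : l / σ ^ 2 < m / σ := by
        rw [div_lt_div_iff₀ (by positivity) hσ]
        nlinarith
      have hlow : c₁ ≤ ∫ x in (3/4:ℝ)..(5/4), f x := by
        have hstep : (∫ x in (3/4:ℝ)..(5/4), Real.sqrt (m / σ))
            ≤ ∫ x in (3/4:ℝ)..(5/4), f x := by
          apply intervalIntegral.integral_mono_on (by norm_num)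
            intervalIntegrable_const (hfi _ _)
          intro x hx
          apply Real.sqrt_le_sqrt
          have hpm := hmle x hx
          have e : 2 * dataDensity χ x / σ - l / σ ^ 2
              = (2 * dataDensity χ x * σ - l) / σ ^ 2 := by
            field_simp
          rw [e, div_le_div_iff₀ hσ (by positivity)]
          nlinarith [mul_le_mul_of_nonneg_right hpm (sq_nonneg σ),
            mul_lt_mul_of_pos_right hlσm hσ]
        calc c₁ = ∫ x in (3/4:ℝ)..(5/4), Real.sqrt (m / σ) := by
              rw [intervalIntegral.integral_const, smul_eq_mul, hc₁_def]
              norm_num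
          _ ≤ _ := hstep
      refine hlow.trans (intervalIntegral.integral_mono_interval h34 (by norm_num) h54
        (ae_of_all _ hfnn) (hfi _ _))
    · -- upper bound
      have hfg : ∀ x ∈ Set.Icc (x₁ l) (x₂ l), f x ≤ g x := by
        intro x hx
        have hx0 : 0 < x := lt_of_lt_of_le h1 hx.1
        have hstep1 : f x ≤ Real.sqrt (2 * dataDensity χ x / σ) := by
          apply Real.sqrt_le_sqrt
          have : 0 ≤ l / σ^2 := by positivity
          linarith
        refine hstep1.trans (le_of_eq ?_)
        have hpx : 2 * dataDensity χ x / σ = (2/(σ*Γc)) * (x ^ χ * Real.exp (-x^2)) := by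
          unfold dataDensity
          rw [abs_of_pos hx0, ← hΓc_def]
          field_simp
        rw [hpx, Real.sqrt_mul (by positivity), Real.sqrt_mul (Real.rpow_nonneg hx0.le χ)]
        have e1 : Real.sqrt (x ^ χ) = x ^ (χ/2) := by
          rw [Real.sqrt_eq_rpow, ← Real.rpow_mul hx0.le, mul_one_div]
        have e2 : Real.sqrt (Real.exp (-x^2)) = Real.exp (-(1/2) * x^2) := by
          rw [← Real.exp_half]
          ring_nf
        rw [e1, e2]
      have hgi : IntervalIntegrable g volume (x₁ l) (x₂ l) := by
        rw [intervalIntegrable_iff]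
        exact hgint.mono_set (by
          rw [Set.uIoc_of_le h12.le]
          exact fun x hx => lt_trans h1 hx.1)
      have h1' := intervalIntegral.integral_mono_on h12.le (hfi _ _) hgi hfg
      have h2' : (∫ x in (x₁ l)..(x₂ l), g x) ≤ C₁ := by
        rw [intervalIntegral.integral_of_le h12.le]
        apply setIntegral_mono_set hgint
        · filter_upwards [ae_restrict_mem measurableSet_Ioi] with x hx
          exact mul_nonneg (Real.sqrt_nonneg _)
            (mul_nonneg (Real.rpow_pos_of_pos hx _).le (Real.exp_pos _).le)
        · have hsub : Set.Ioc (x₁ l) (x₂ l) ⊆ Set.Ioi 0 := fun x hx => lt_trans h1 hx.1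
          exact hsub.eventuallyLE
      exact h1'.trans h2'
  -- conclusion
  have hc₁C₁ : c₁ ≤ C₁ := by
    have h := hIb (lamS / 2) (by positivity) (by linarith)
    linarith [h.1, h.2]
  obtain ⟨ρ₁, hρ₁⟩ := Filter.eventually_atTop.mp
    ((hto0.eventually_lt_const hlamS).and hsc)
  refine ⟨4 * c₁ ^ 2 / Real.pi ^ 2, 36 * C₁ ^ 2 / Real.pi ^ 2, by positivity, ?_, max ρ₁ 3, ?_⟩
  · have hsq : c₁ ^ 2 ≤ C₁ ^ 2 := pow_le_pow_left₀ hc₁pos.le hc₁C₁ 2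
    rw [div_le_div_iff₀ (by positivity) (by positivity)]
    nlinarith [hsq, sq_nonneg Real.pi, sq_nonneg C₁]
  · intro ρ hρ
    have hρ3 : 3 ≤ ρ := le_trans (le_max_right _ _) hρ
    have hρR : (3:ℝ) ≤ (ρ:ℝ) := by exact_mod_cast hρ3
    have hρ0 : (0:ℝ) < (ρ:ℝ) := by linarith
    obtain ⟨hlt, θ, hθ, heq⟩ := hρ₁ ρ (le_trans (le_max_left _ _) hρ)
    obtain ⟨hI1, hI2⟩ := hIb (lam ρ) (hpos ρ) hlt
    set I := ∫ x in (x₁ (lam ρ))..(x₂ (lam ρ)),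
      Real.sqrt (2 * dataDensity χ x / σ - lam ρ / σ ^ 2) with hI_def
    set D := θ + ((ρ : ℝ) - 1) * Real.pi / 2 with hD_def
    have hθ1 := hθ.1
    have hθ2 := hθ.2
    have hD1 : (ρ:ℝ) * Real.pi / 6 ≤ D := by
      rw [hD_def]
      have hkey : 0 ≤ (2 * (ρ:ℝ) - 6) * Real.pi :=
        mul_nonneg (by linarith) hπ.le
      linarith
    have hD2 : D ≤ (ρ:ℝ) * Real.pi / 2 := by
      rw [hD_def]
      linarith
    have hD0 : 0 < D := lt_of_lt_of_le (by positivity) hD1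
    have hzpow : ((ρ:ℝ)) ^ (-2 : ℤ) = 1 / ((ρ:ℝ)) ^ 2 := by
      rw [zpow_neg, one_div]
      norm_cast
    rw [heq, hzpow]
    rw [div_pow]
    constructor
    · have e : 4 * c₁ ^ 2 / Real.pi ^ 2 * (1 / (ρ:ℝ) ^ 2)
          = c₁ ^ 2 / ((ρ:ℝ) * Real.pi / 2) ^ 2 := by
        field_simp
        ring
      rw [e]
      exact div_le_div₀ (sq_nonneg I) (pow_le_pow_left₀ hc₁pos.le hI1 2)
        (pow_pos hD0 2) (pow_le_pow_left₀ hD0.le hD2 2)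
    · have e : 36 * C₁ ^ 2 / Real.pi ^ 2 * (1 / (ρ:ℝ) ^ 2)
          = C₁ ^ 2 / ((ρ:ℝ) * Real.pi / 6) ^ 2 := by
        field_simp
        ring
      rw [e]
      exact div_le_div₀ (sq_nonneg C₁) (pow_le_pow_left₀ (hc₁pos.le.trans hI1) hI2 2)
        (pow_pos (by positivity : (0:ℝ) < (ρ:ℝ) * Real.pi / 6) 2)
        (pow_le_pow_left₀ (by positivity) hD1 2)
end

section
/- Let χ ≥ 0 and let X₁,…,X_P be i.i.d. samples from the density p. Then there exist constants 0 < c ≤ C and P₀ such that for all P ≥ P₀, c · P^{−1/(χ+1)} ≤ E[ min_{1 ≤ i ≤ P} |X_i| ] ≤ C · P^{−1/(χ+1)}. -/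
/-!
Let `G t = μ {x | t < |x|}` for the common law `μ` of the samples. By independence the minimum of
`P` samples exceeds `t` with probability `G(t)^P`, so by the layer-cake formula its expectation is
`∫_0^∞ G(t)^P dt`. Near the origin the density behaves like `|x|^χ`, so with `q = χ + 1` we have
`a t^q ≤ 1 - G t ≤ b t^q` for `t ≤ 1`. On `t ≤ P^{-1/q}` this gives
`G(t)^P ≥ (1 - b/P)^P ≥ e^{-2b}`, whence the lower bound. For the upper bound,
`G(t)^P ≤ exp(-a P t^q)` on `(0, 1]`, whose integral is `Γ(1/q + 1) (aP)^{-1/q}`, while on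
`(1, ∞)` we have `G(t)^P ≤ G(1)^{P-1} G(t)`, where `G(1) ≤ e^{-a}` and `∫ G = E|X| < ∞`; this part
is exponentially small in `P`.
-/

open MeasureTheory ProbabilityTheory Real

open Set

lemma exp_neg_two_mul_le_one_sub {u : ℝ} (hu0 : 0 ≤ u) (hu : u ≤ 1 / 2) :
    exp (-(2 * u)) ≤ 1 - u := by
  rw [exp_neg, inv_le_iff_one_le_mul₀ (exp_pos _)]
  nlinarith [add_one_le_exp (2 * u), exp_pos (2 * u)]

lemma exp_neg_pow_pred_le {a q : ℝ} (ha : 0 < a) (hq : 1 ≤ q) {P : ℕ} (hP : 0 < P) :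
    exp (-a) ^ (P - 1) ≤ exp a / a * (P : ℝ) ^ (-(1 / q)) := by
  have hP' : (1 : ℝ) ≤ P := by exact_mod_cast hP
  calc exp (-a) ^ (P - 1) = exp a * exp (-(a * P)) := by
        rw [← exp_nat_mul, ← exp_add, Nat.cast_pred hP]
        ring_nf
    _ ≤ exp a * (a * P)⁻¹ := by
        rw [exp_neg]
        gcongr
        linarith [add_one_le_exp (a * P)]
    _ = exp a / a * (P : ℝ) ^ (-1 : ℝ) := by
        rw [rpow_neg_one]
        field_simp
    _ ≤ exp a / a * (P : ℝ) ^ (-(1 / q)) := by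
        gcongr
        exact (div_le_one (by linarith)).2 hq

lemma ENNReal.one_sub_ofReal_le_ofReal_one_sub (s : ℝ) :
    1 - ENNReal.ofReal s ≤ ENNReal.ofReal (1 - s) := by
  rcases le_total 0 s with hs | hs
  · rw [ENNReal.ofReal_sub _ hs, ENNReal.ofReal_one]
  · rw [ENNReal.ofReal_of_nonpos hs, tsub_zero, ← ENNReal.ofReal_one]
    exact ENNReal.ofReal_le_ofReal (by linarith)

lemma lt_iInf_iff_of_finite {ι : Type*} [Finite ι] [Nonempty ι] {f : ι → ℝ} {t : ℝ} :
    t < ⨅ i, f i ↔ ∀ i, t < f i := by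
  refine ⟨fun h i => h.trans_le (ciInf_le (Set.finite_range f).bddBelow i), fun h => ?_⟩
  obtain ⟨i, hi⟩ := exists_eq_ciInf_of_finite (f := f)
  exact hi ▸ h i

lemma abs_le_eq_Icc (t : ℝ) : {x : ℝ | |x| ≤ t} = Icc (-t) t := by
  ext x
  simp [abs_le]

lemma integrable_abs_rpow_mul_exp_neg_mul_sq {b : ℝ} (hb : 0 < b) {s : ℝ} (hs : -1 < s) :
    Integrable fun x : ℝ => |x| ^ s * exp (-b * x ^ 2) := by
  set g := (Ioi (0 : ℝ)).indicator fun x : ℝ => x ^ s * exp (-b * x ^ 2)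
  have hg : Integrable g :=
    (integrable_indicator_iff measurableSet_Ioi).2 (integrableOn_rpow_mul_exp_neg_mul_sq hb hs)
  refine (hg.add hg.comp_neg).congr ?_
  filter_upwards [volume.ae_ne 0] with x hx
  rcases hx.lt_or_gt with h | h
  · simp [g, h, h.not_gt, abs_of_neg h]
  · simp [g, h, h.not_gt, abs_of_pos h]

lemma lintegral_ofReal_iInf_abs_eq {Ω : Type*} [MeasureSpace Ω] {X : ℕ → Ω → ℝ}
    (hmeas : ∀ i, Measurable (X i)) (hindep : iIndepFun X ℙ) {μ : Measure ℝ}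
    (hlaw : ∀ i, Measure.map (X i) ℙ = μ) {P : ℕ} (hP : 0 < P) :
    ∫⁻ ω, ENNReal.ofReal (⨅ i : Fin P, |X i ω|) = ∫⁻ t in Ioi 0, μ {x | t < |x|} ^ P := by
  have : Nonempty (Fin P) := ⟨⟨0, hP⟩⟩
  have hset : ∀ t : ℝ, MeasurableSet {x : ℝ | t < |x|} := fun t =>
    measurableSet_lt measurable_const measurable_abs
  rw [lintegral_eq_lintegral_meas_lt ℙ (f := fun ω => ⨅ i : Fin P, |X i ω|)
    (ae_of_all _ fun ω => le_ciInf fun i => abs_nonneg _)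
    (Measurable.iInf fun i : Fin P => (hmeas i).abs).aemeasurable]
  refine lintegral_congr fun t => ?_
  have hinter : {ω | t < ⨅ i : Fin P, |X i ω|}
      = ⋂ i ∈ (Finset.univ : Finset (Fin P)), X i ⁻¹' {x | t < |x|} := by
    ext ω
    simp [lt_iInf_iff_of_finite]
  rw [hinter, (hindep.precomp Fin.val_injective).measure_inter_preimage_eq_mul _
    (sets := fun _ => {x | t < |x|}) fun _ _ => hset t]
  simp only [← Measure.map_apply (hmeas _) (hset t), hlaw, Finset.prod_const, Finset.card_univ,
    Fintype.card_fin]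

lemma lintegral_measure_lt_abs_eq (μ : Measure ℝ) :
    ∫⁻ t in Ioi 0, μ {x | t < |x|} = ∫⁻ x, ‖x‖ₑ ∂μ := by
  simp only [enorm_eq_ofReal_abs]
  exact (lintegral_eq_lintegral_meas_lt μ (ae_of_all _ abs_nonneg)
    measurable_abs.aemeasurable).symm

section SmallBall

variable {μ : Measure ℝ} [IsProbabilityMeasure μ]

lemma measure_lt_abs_eq_one_sub (t : ℝ) : μ {x | t < |x|} = 1 - μ {x | |x| ≤ t} := by
  rw [← prob_compl_eq_one_sub (measurableSet_le measurable_abs measurable_const)]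
  congr 1
  ext x
  simp

lemma measure_lt_abs_le_exp_neg {s t : ℝ} (h : ENNReal.ofReal s ≤ μ {x | |x| ≤ t}) :
    μ {x | t < |x|} ≤ ENNReal.ofReal (exp (-s)) := by
  rw [measure_lt_abs_eq_one_sub]
  calc 1 - μ {x | |x| ≤ t} ≤ 1 - ENNReal.ofReal s := tsub_le_tsub_left h 1
    _ ≤ ENNReal.ofReal (1 - s) := ENNReal.one_sub_ofReal_le_ofReal_one_sub s
    _ ≤ ENNReal.ofReal (exp (-s)) := ENNReal.ofReal_le_ofReal (one_sub_le_exp_neg s)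

lemma ofReal_mul_rpow_le_lintegral_measure_lt_abs_pow {q b : ℝ} (hq : 0 < q) (hb : 0 ≤ b)
    (hup : ∀ t ∈ Ioc 0 1, μ {x | |x| ≤ t} ≤ ENNReal.ofReal (b * t ^ q))
    {P : ℕ} (hP : 0 < P) (hbP : 2 * b ≤ P) :
    ENNReal.ofReal (exp (-(2 * b)) * (P : ℝ) ^ (-(1 / q)))
      ≤ ∫⁻ t in Ioi 0, μ {x | t < |x|} ^ P := by
  have hP' : (0 : ℝ) < P := by exact_mod_cast hP
  set r := (P : ℝ) ^ (-(1 / q))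
  have hr1 : r ≤ 1 :=
    rpow_le_one_of_one_le_of_nonpos (by exact_mod_cast hP) (neg_nonpos.2 (by positivity))
  have hrq : r ^ q = (P : ℝ)⁻¹ := by
    rw [← rpow_mul hP'.le, neg_mul, one_div, inv_mul_cancel₀ hq.ne', rpow_neg_one]
  have hpt : ∀ t ∈ Ioc 0 r, ENNReal.ofReal (exp (-(2 * b))) ≤ μ {x | t < |x|} ^ P := by
    intro t ht
    have hF : μ {x | |x| ≤ t} ≤ ENNReal.ofReal (b / P) := by
      refine (hup t ⟨ht.1, ht.2.trans hr1⟩).trans (ENNReal.ofReal_le_ofReal ?_)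
      rw [div_eq_mul_inv, ← hrq]
      exact mul_le_mul_of_nonneg_left (rpow_le_rpow ht.1.le ht.2 hq.le) hb
    calc ENNReal.ofReal (exp (-(2 * b))) = ENNReal.ofReal (exp (-(2 * (b / P))) ^ P) := by
          rw [← exp_nat_mul]
          field_simp
      _ ≤ ENNReal.ofReal ((1 - b / P) ^ P) := by
          gcongr
          exact exp_neg_two_mul_le_one_sub (by positivity) (by rw [div_le_iff₀ hP']; linarith)
      _ = (1 - ENNReal.ofReal (b / P)) ^ P := by
          rw [ENNReal.ofReal_pow (by rw [sub_nonneg, div_le_one hP']; linarith),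
            ENNReal.ofReal_sub _ (by positivity), ENNReal.ofReal_one]
      _ ≤ μ {x | t < |x|} ^ P := by
          rw [measure_lt_abs_eq_one_sub]
          gcongr
  calc ENNReal.ofReal (exp (-(2 * b)) * r)
      = ∫⁻ _ in Ioc 0 r, ENNReal.ofReal (exp (-(2 * b))) := by
        rw [setLIntegral_const, volume_Ioc, sub_zero, ENNReal.ofReal_mul (exp_pos _).le]
    _ ≤ ∫⁻ t in Ioc 0 r, μ {x | t < |x|} ^ P := setLIntegral_mono' measurableSet_Ioc hpt
    _ ≤ ∫⁻ t in Ioi 0, μ {x | t < |x|} ^ P := lintegral_mono_set Ioc_subset_Ioi_self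

lemma setLIntegral_Ioc_measure_lt_abs_pow_le {q a : ℝ} (hq : 0 < q) (ha : 0 < a)
    (hlo : ∀ t ∈ Ioc 0 1, ENNReal.ofReal (a * t ^ q) ≤ μ {x | |x| ≤ t}) {P : ℕ} (hP : 0 < P) :
    ∫⁻ t in Ioc 0 1, μ {x | t < |x|} ^ P
      ≤ ENNReal.ofReal (Gamma (1 / q + 1) * a ^ (-(1 / q)) * (P : ℝ) ^ (-(1 / q))) := by
  have hP' : (0 : ℝ) < P := by exact_mod_cast hP
  have hpt : ∀ t ∈ Ioc (0 : ℝ) 1,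
      μ {x | t < |x|} ^ P ≤ ENNReal.ofReal (exp (-(a * P) * t ^ q)) := by
    intro t ht
    calc μ {x | t < |x|} ^ P ≤ ENNReal.ofReal (exp (-(a * t ^ q))) ^ P :=
          pow_le_pow_left' (measure_lt_abs_le_exp_neg (hlo t ht)) P
      _ = ENNReal.ofReal (exp (-(a * P) * t ^ q)) := by
          rw [← ENNReal.ofReal_pow (exp_pos _).le, ← exp_nat_mul]
          ring_nf
  have hint : IntegrableOn (fun t : ℝ => exp (-(a * P) * t ^ q)) (Ioi 0) := by
    simpa using
      integrableOn_rpow_mul_exp_neg_mul_rpow neg_one_lt_zero hq (by positivity : 0 < a * P)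
  calc ∫⁻ t in Ioc 0 1, μ {x | t < |x|} ^ P
      ≤ ∫⁻ t in Ioc 0 1, ENNReal.ofReal (exp (-(a * P) * t ^ q)) :=
        setLIntegral_mono' measurableSet_Ioc hpt
    _ ≤ ∫⁻ t in Ioi 0, ENNReal.ofReal (exp (-(a * P) * t ^ q)) :=
        lintegral_mono_set Ioc_subset_Ioi_self
    _ = ENNReal.ofReal (∫ t in Ioi 0, exp (-(a * P) * t ^ q)) :=
        (ofReal_integral_eq_lintegral_ofReal hint (ae_of_all _ fun _ => (exp_pos _).le)).symm
    _ = ENNReal.ofReal (Gamma (1 / q + 1) * a ^ (-(1 / q)) * (P : ℝ) ^ (-(1 / q))) := by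
        rw [integral_exp_neg_mul_rpow hq (by positivity), mul_rpow ha.le hP'.le, neg_div]
        ring_nf

lemma setLIntegral_Ioi_one_measure_lt_abs_pow_le {s : ℝ}
    (h : ENNReal.ofReal s ≤ μ {x | |x| ≤ 1}) {P : ℕ} (hP : 0 < P) :
    ∫⁻ t in Ioi 1, μ {x | t < |x|} ^ P
      ≤ ENNReal.ofReal (exp (-s)) ^ (P - 1) * ∫⁻ x, ‖x‖ₑ ∂μ := by
  have hpt : ∀ t ∈ Ioi (1 : ℝ),
      μ {x | t < |x|} ^ P ≤ ENNReal.ofReal (exp (-s)) ^ (P - 1) * μ {x | t < |x|} := by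
    intro t ht
    rw [← pow_sub_one_mul hP.ne']
    gcongr
    calc μ {x | t < |x|} ≤ μ {x | 1 < |x|} := measure_mono fun x hx => ht.out.trans hx
      _ ≤ ENNReal.ofReal (exp (-s)) := measure_lt_abs_le_exp_neg h
  calc ∫⁻ t in Ioi 1, μ {x | t < |x|} ^ P
      ≤ ∫⁻ t in Ioi 1, ENNReal.ofReal (exp (-s)) ^ (P - 1) * μ {x | t < |x|} :=
        setLIntegral_mono' measurableSet_Ioi hpt
    _ = ENNReal.ofReal (exp (-s)) ^ (P - 1) * ∫⁻ t in Ioi 1, μ {x | t < |x|} :=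
        lintegral_const_mul' _ _ (by simp)
    _ ≤ ENNReal.ofReal (exp (-s)) ^ (P - 1) * ∫⁻ x, ‖x‖ₑ ∂μ := by
        rw [← lintegral_measure_lt_abs_eq]
        gcongr
        exact zero_le_one

lemma lintegral_measure_lt_abs_pow_le {q a : ℝ} (hq : 1 ≤ q) (ha : 0 < a)
    (hlo : ∀ t ∈ Ioc 0 1, ENNReal.ofReal (a * t ^ q) ≤ μ {x | |x| ≤ t})
    (hμ : ∫⁻ x, ‖x‖ₑ ∂μ ≠ ⊤) {P : ℕ} (hP : 0 < P) :
    ∫⁻ t in Ioi 0, μ {x | t < |x|} ^ P ≤ ENNReal.ofReal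
      ((Gamma (1 / q + 1) * a ^ (-(1 / q)) + exp a / a * (∫⁻ x, ‖x‖ₑ ∂μ).toReal)
        * (P : ℝ) ^ (-(1 / q))) := by
  have hlo1 : ENNReal.ofReal a ≤ μ {x | |x| ≤ 1} := by
    simpa using hlo 1 ⟨one_pos, le_rfl⟩
  rw [← Ioc_union_Ioi_eq_Ioi zero_le_one,
    lintegral_union measurableSet_Ioi (Ioc_disjoint_Ioi le_rfl)]
  calc _ ≤ ENNReal.ofReal (Gamma (1 / q + 1) * a ^ (-(1 / q)) * (P : ℝ) ^ (-(1 / q)))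
          + ENNReal.ofReal (exp (-a)) ^ (P - 1) * ∫⁻ x, ‖x‖ₑ ∂μ :=
        add_le_add (setLIntegral_Ioc_measure_lt_abs_pow_le (by linarith) ha hlo hP)
          (setLIntegral_Ioi_one_measure_lt_abs_pow_le hlo1 hP)
    _ ≤ ENNReal.ofReal (Gamma (1 / q + 1) * a ^ (-(1 / q)) * (P : ℝ) ^ (-(1 / q)))
          + ENNReal.ofReal (exp a / a * (P : ℝ) ^ (-(1 / q)))
            * ENNReal.ofReal (∫⁻ x, ‖x‖ₑ ∂μ).toReal := by
        rw [ENNReal.ofReal_toReal hμ, ← ENNReal.ofReal_pow (exp_pos _).le]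
        gcongr
        exact exp_neg_pow_pred_le ha hq hP
    _ = _ := by
        rw [← ENNReal.ofReal_mul (by positivity),
          ← ENNReal.ofReal_add (by positivity) (by positivity)]
        ring_nf

end SmallBall

theorem exists_bounds_integral_iInf_abs {Ω : Type*} [MeasureSpace Ω] {X : ℕ → Ω → ℝ}
    (hmeas : ∀ i, Measurable (X i)) (hindep : iIndepFun X ℙ)
    {μ : Measure ℝ} [IsProbabilityMeasure μ] (hlaw : ∀ i, Measure.map (X i) ℙ = μ)
    (hμ : Integrable id μ) {q a b : ℝ} (hq : 1 ≤ q) (ha : 0 < a) (hb : 0 ≤ b)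
    (hlo : ∀ t ∈ Ioc 0 1, ENNReal.ofReal (a * t ^ q) ≤ μ {x | |x| ≤ t})
    (hup : ∀ t ∈ Ioc 0 1, μ {x | |x| ≤ t} ≤ ENNReal.ofReal (b * t ^ q)) :
    ∃ c C : ℝ, 0 < c ∧ c ≤ C ∧ ∃ P₀ : ℕ, 1 ≤ P₀ ∧ ∀ P : ℕ, P₀ ≤ P →
      c * (P : ℝ) ^ (-(1 / q)) ≤ (∫ ω, (⨅ i : Fin P, |X i ω|) ∂ℙ) ∧
      (∫ ω, (⨅ i : Fin P, |X i ω|) ∂ℙ) ≤ C * (P : ℝ) ^ (-(1 / q)) := by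
  set C := Gamma (1 / q + 1) * a ^ (-(1 / q)) + exp a / a * (∫⁻ x, ‖x‖ₑ ∂μ).toReal
  have hC : 0 ≤ C := by positivity
  refine ⟨exp (-(2 * b)), C + exp (-(2 * b)), exp_pos _, le_add_of_nonneg_left hC,
    ⌈2 * b⌉₊ + 1, by omega, fun P hP => ?_⟩
  have hP0 : 0 < P := by omega
  have hbP : 2 * b ≤ P := (Nat.le_ceil _).trans (by exact_mod_cast (Nat.le_succ _).trans hP)
  have hupper := lintegral_measure_lt_abs_pow_le hq ha hlo hμ.2.ne hP0
  have : Nonempty (Fin P) := ⟨⟨0, hP0⟩⟩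
  rw [integral_eq_lintegral_of_nonneg_ae (ae_of_all _ fun ω => le_ciInf fun i => abs_nonneg _)
      (Measurable.iInf fun i : Fin P => (hmeas i).abs).aestronglyMeasurable,
    lintegral_ofReal_iInf_abs_eq hmeas hindep hlaw hP0]
  constructor
  · exact (ENNReal.ofReal_le_iff_le_toReal (ne_top_of_le_ne_top ENNReal.ofReal_ne_top hupper)).1
      (ofReal_mul_rpow_le_lintegral_measure_lt_abs_pow (by linarith) hb hup hP0 hbP)
  · refine (ENNReal.toReal_le_of_le_ofReal (by positivity) hupper).trans ?_
    exact mul_le_mul_of_nonneg_right (le_add_of_nonneg_right (exp_pos _).le) (by positivity)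

noncomputable abbrev dataMeasure (χ : ℝ) : Measure ℝ :=
  volume.withDensity fun x => ENNReal.ofReal (dataDensity χ x)

section DataDensity

variable {χ : ℝ}

lemma measurable_dataDensity : Measurable (dataDensity χ) := by
  unfold dataDensity
  fun_prop

lemma dataDensity_nonneg (hχ : -1 < χ) (x : ℝ) : 0 ≤ dataDensity χ x := by
  have : 0 < Gamma ((1 + χ) / 2) := Gamma_pos_of_pos (by linarith)
  unfold dataDensity
  positivity

lemma dataDensity_le_of_abs_le (hχ : 0 ≤ χ) {x t : ℝ} (hxt : |x| ≤ t) :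
    dataDensity χ x ≤ t ^ χ / Gamma ((1 + χ) / 2) := by
  have hΓ : 0 < Gamma ((1 + χ) / 2) := Gamma_pos_of_pos (by linarith)
  refine div_le_div_of_nonneg_right ?_ hΓ.le
  calc |x| ^ χ * exp (-x ^ 2) ≤ |x| ^ χ :=
        mul_le_of_le_one_right (by positivity) (exp_le_one_iff.2 (by nlinarith))
    _ ≤ t ^ χ := rpow_le_rpow (abs_nonneg x) hxt hχ

lemma le_dataDensity_of_mem_Icc (hχ : 0 ≤ χ) {x t : ℝ} (ht : 0 < t) (ht1 : t ≤ 1)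
    (hx : x ∈ Icc (t / 2) t) :
    (t / 2) ^ χ * exp (-1) / Gamma ((1 + χ) / 2) ≤ dataDensity χ x := by
  have hΓ : 0 < Gamma ((1 + χ) / 2) := Gamma_pos_of_pos (by linarith)
  have hx0 : 0 < x := by linarith [hx.1]
  refine div_le_div_of_nonneg_right (mul_le_mul ?_ ?_ (exp_pos _).le (by positivity)) hΓ.le
  · rw [abs_of_pos hx0]
    exact rpow_le_rpow (by positivity) hx.1 hχ
  · exact exp_le_exp.2 (by nlinarith [hx.2])

lemma dataMeasure_abs_le_le (hχ : 0 ≤ χ) {t : ℝ} (ht : 0 < t) :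
    dataMeasure χ {x | |x| ≤ t} ≤ ENNReal.ofReal (2 / Gamma ((1 + χ) / 2) * t ^ (χ + 1)) := by
  rw [withDensity_apply _ (measurableSet_le measurable_abs measurable_const)]
  calc ∫⁻ x in {x | |x| ≤ t}, ENNReal.ofReal (dataDensity χ x)
      ≤ ∫⁻ _ in {x | |x| ≤ t}, ENNReal.ofReal (t ^ χ / Gamma ((1 + χ) / 2)) :=
        setLIntegral_mono' (measurableSet_le measurable_abs measurable_const) fun x hx =>
          ENNReal.ofReal_le_ofReal (dataDensity_le_of_abs_le hχ hx)
    _ = ENNReal.ofReal (2 / Gamma ((1 + χ) / 2) * t ^ (χ + 1)) := by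
        rw [setLIntegral_const, abs_le_eq_Icc, volume_Icc, ← ENNReal.ofReal_mul (by positivity),
          rpow_add_one ht.ne']
        ring_nf

lemma ofReal_le_dataMeasure_abs_le (hχ : 0 ≤ χ) {t : ℝ} (ht : t ∈ Ioc 0 1) :
    ENNReal.ofReal (exp (-1) / (2 ^ (χ + 1) * Gamma ((1 + χ) / 2)) * t ^ (χ + 1))
      ≤ dataMeasure χ {x | |x| ≤ t} := by
  have hΓ : 0 < Gamma ((1 + χ) / 2) := Gamma_pos_of_pos (by linarith)
  have ht0 : 0 < t := ht.1
  rw [withDensity_apply _ (measurableSet_le measurable_abs measurable_const)]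
  calc ENNReal.ofReal (exp (-1) / (2 ^ (χ + 1) * Gamma ((1 + χ) / 2)) * t ^ (χ + 1))
      = ∫⁻ _ in Icc (t / 2) t,
          ENNReal.ofReal ((t / 2) ^ χ * exp (-1) / Gamma ((1 + χ) / 2)) := by
        rw [setLIntegral_const, volume_Icc, ← ENNReal.ofReal_mul (by positivity),
          div_rpow ht0.le zero_le_two, rpow_add_one ht0.ne', rpow_add_one two_ne_zero]
        congr 1
        field_simp
        ring
    _ ≤ ∫⁻ x in Icc (t / 2) t, ENNReal.ofReal (dataDensity χ x) :=
        setLIntegral_mono' measurableSet_Icc fun x hx =>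
          ENNReal.ofReal_le_ofReal (le_dataDensity_of_mem_Icc hχ ht0 ht.2 hx)
    _ ≤ ∫⁻ x in {x | |x| ≤ t}, ENNReal.ofReal (dataDensity χ x) := by
        refine lintegral_mono_set ?_
        rw [abs_le_eq_Icc]
        exact Icc_subset_Icc (by linarith) le_rfl

lemma integrable_id_dataMeasure (hχ : -1 < χ) : Integrable id (dataMeasure χ) := by
  have hΓ : 0 < Gamma ((1 + χ) / 2) := Gamma_pos_of_pos (by linarith)
  rw [integrable_withDensity_iff_integrable_smul' measurable_dataDensity.ennreal_ofReal
    (ae_of_all _ fun _ => ENNReal.ofReal_lt_top)]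
  refine ((integrable_abs_rpow_mul_exp_neg_mul_sq one_pos (s := χ + 1) (by linarith)).div_const
    (Gamma ((1 + χ) / 2))).mono'
    (measurable_dataDensity.ennreal_ofReal.ennreal_toReal.smul measurable_id).aestronglyMeasurable
    (ae_of_all _ fun x => le_of_eq ?_)
  rw [ENNReal.toReal_ofReal (dataDensity_nonneg hχ x), smul_eq_mul, norm_mul,
    norm_of_nonneg (dataDensity_nonneg hχ x), norm_eq_abs, id, dataDensity,
    rpow_add_one' (abs_nonneg x) (by linarith)]
  ring_nf

end DataDensity

/-- For i.i.d. samples `X₁, …, X_P` from the density `p`, the expected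
minimal distance of a sample to the origin scales as `P^{-1/(χ+1)}`. -/
theorem expected_min_distance_scaling
    {Ω : Type*} [MeasureSpace Ω] [IsProbabilityMeasure (ℙ : Measure Ω)]
    (χ : ℝ) (hχ : 0 ≤ χ)
    (X : ℕ → Ω → ℝ)
    (hmeas : ∀ i, Measurable (X i))
    (hindep : iIndepFun X ℙ)
    (hlaw : ∀ i, Measure.map (X i) ℙ
      = volume.withDensity (fun x => ENNReal.ofReal (dataDensity χ x))) :
    ∃ c C : ℝ, 0 < c ∧ c ≤ C ∧ ∃ P₀ : ℕ, 1 ≤ P₀ ∧ ∀ P : ℕ, P₀ ≤ P →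
      c * (P : ℝ) ^ (-(1 / (χ + 1)))
          ≤ (∫ ω, (⨅ i : Fin P, |X i ω|) ∂ℙ) ∧
      (∫ ω, (⨅ i : Fin P, |X i ω|) ∂ℙ)
          ≤ C * (P : ℝ) ^ (-(1 / (χ + 1))) := by
  have : IsProbabilityMeasure (dataMeasure χ) := by
    rw [dataMeasure, ← hlaw 0]
    exact Measure.isProbabilityMeasure_map (hmeas 0).aemeasurable
  have hΓ : 0 < Gamma ((1 + χ) / 2) := Gamma_pos_of_pos (by linarith)
  exact exists_bounds_integral_iInf_abs hmeas hindep hlaw (integrable_id_dataMeasure (by linarith))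
    (by linarith) (by positivity) (by positivity) (fun t ht => ofReal_le_dataMeasure_abs_le hχ ht)
    (fun t ht => dataMeasure_abs_le_le hχ ht.1)
end

section
/- Let a > 1 and set λ_ρ = ρ^{−a} for ρ ∈ ℕ, ρ ≥ 1. For t > 0 define S(t) = Σ_{ρ=1}^∞ 1/(1 + t/λ_ρ) = Σ_{ρ=1}^∞ 1/(1 + t ρ^a). Then S(t) is finite for every t > 0, S is continuous and strictly decreasing on (0,∞) with S(t) → ∞ as t → 0⁺ and S(t) → 0 as t → ∞; hence for every real P > 0 there is a unique t_P > 0 with S(t_P) = P. Moreover there exist constants 0 < c ≤ C and P₀ such that for all P ≥ P₀, c · P^{−a} ≤ t_P ≤ C · P^{−a}; in particular t_P is of the same order as λ_{⌈P⌉}. -/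
/-!
Each summand `1 / (1 + t ρ^a)` is positive, strictly decreasing in `t` and at most `ρ^{-a} / t`;
this gives summability, continuity (by domination on `[ε, ∞)`), strict monotonicity and
`S(t) → 0`. For the scale write `t = x^{-a}` with `x ≥ 1`: the first `⌊x⌋` summands are at least
`1/2`, while splitting the sum at `⌈x⌉` and comparing the tail with `∫_{⌈x⌉}^∞ s^{-a} ds` gives
`S(t) ≤ ⌈x⌉ + x / (a - 1)`. So `S(t) ≍ t^{-1/a}` on `(0, 1]`, and inverting this for
`P = S(t) ≥ S(1)` yields `t ≍ P^{-a}`.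
-/

open Filter Topology

/-- The self-consistency function `S(t) = Σ_{ρ≥1} 1/(1 + t ρ^a)` for the power-law
spectrum `λ_ρ = ρ^{−a}`. -/
noncomputable def replicaS (a : ℝ) (t : ℝ) : ℝ :=
  ∑' ρ : ℕ, 1 / (1 + t * ((ρ : ℝ) + 1) ^ a)

open Set

noncomputable def replicaTerm (a t : ℝ) (ρ : ℕ) : ℝ :=
  1 / (1 + t * ((ρ : ℝ) + 1) ^ a)

lemma replicaS_eq_tsum (a t : ℝ) : replicaS a t = ∑' ρ, replicaTerm a t ρ := rfl

theorem StrictAntiOn.existsUnique_eq_of_tendsto {f : ℝ → ℝ} {c b y : ℝ}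
    (hcont : ContinuousOn f (Ioi c)) (hanti : StrictAntiOn f (Ioi c))
    (hc : Tendsto f (𝓝[>] c) atTop) (hb : Tendsto f atTop (𝓝 b)) (hy : b < y) :
    ∃! t, c < t ∧ f t = y := by
  obtain ⟨t₁, hyt₁, ht₁⟩ : ∃ t₁, y ≤ f t₁ ∧ c < t₁ :=
    ((hc.eventually_ge_atTop y).and self_mem_nhdsWithin).exists
  obtain ⟨t₂, ht₁₂, hyt₂⟩ : ∃ t₂, t₁ ≤ t₂ ∧ f t₂ < y :=
    ((eventually_ge_atTop t₁).and (hb.eventually (gt_mem_nhds hy))).exists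
  have hsub : Icc t₁ t₂ ⊆ Ioi c := fun s hs => ht₁.trans_le hs.1
  obtain ⟨t, ht, hft⟩ := intermediate_value_Icc' ht₁₂ (hcont.mono hsub) ⟨hyt₂.le, hyt₁⟩
  exact ⟨t, ⟨hsub ht, hft⟩, fun s ⟨hs, hfs⟩ => hanti.injOn hs (hsub ht) (hfs.trans hft.symm)⟩

section

variable {a t : ℝ}

lemma replicaTerm_pos (ht : 0 ≤ t) (ρ : ℕ) : 0 < replicaTerm a t ρ := by
  unfold replicaTerm
  positivity

lemma replicaTerm_le_one (ht : 0 ≤ t) (ρ : ℕ) : replicaTerm a t ρ ≤ 1 :=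
  div_le_one_of_le₀ (le_add_of_nonneg_right (by positivity)) (by positivity)

lemma replicaTerm_le_inv_mul (ht : 0 < t) (ρ : ℕ) :
    replicaTerm a t ρ ≤ t⁻¹ * ((ρ : ℝ) + 1) ^ (-a) := by
  calc replicaTerm a t ρ ≤ 1 / (t * ((ρ : ℝ) + 1) ^ a) :=
        one_div_le_one_div_of_le (by positivity) (by linarith)
    _ = t⁻¹ * ((ρ : ℝ) + 1) ^ (-a) := by
        rw [Real.rpow_neg (by positivity), one_div, mul_inv]

lemma strictAntiOn_replicaTerm (ρ : ℕ) : StrictAntiOn (fun t => replicaTerm a t ρ) (Ici 0) := by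
  intro s hs t _ hst
  have hs : (0 : ℝ) ≤ s := hs
  exact one_div_lt_one_div_of_lt (by positivity) (by gcongr)

lemma one_half_le_replicaTerm (ht : 0 ≤ t) {ρ : ℕ} (h : t * ((ρ : ℝ) + 1) ^ a ≤ 1) :
    1 / 2 ≤ replicaTerm a t ρ :=
  one_div_le_one_div_of_le (by positivity) (by linarith)

lemma summable_rpow_neg_nat_succ (ha : 1 < a) :
    Summable fun ρ : ℕ => ((ρ : ℝ) + 1) ^ (-a) := by
  simpa using (summable_nat_add_iff 1).mpr (Real.summable_nat_rpow.mpr (by linarith))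

lemma summable_replicaTerm (ha : 1 < a) (ht : 0 < t) : Summable (replicaTerm a t) :=
  .of_nonneg_of_le (fun ρ => (replicaTerm_pos ht.le ρ).le) (replicaTerm_le_inv_mul ht)
    ((summable_rpow_neg_nat_succ ha).mul_left t⁻¹)

lemma replicaS_le_inv_mul (ha : 1 < a) (ht : 0 < t) :
    replicaS a t ≤ t⁻¹ * ∑' ρ : ℕ, ((ρ : ℝ) + 1) ^ (-a) := by
  rw [replicaS_eq_tsum, ← tsum_mul_left]
  exact (summable_replicaTerm ha ht).tsum_le_tsum (replicaTerm_le_inv_mul ht)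
    ((summable_rpow_neg_nat_succ ha).mul_left t⁻¹)

lemma tendsto_replicaS_atTop (ha : 1 < a) : Tendsto (replicaS a) atTop (𝓝 0) := by
  have hbound := tendsto_inv_atTop_zero.mul_const (∑' ρ : ℕ, ((ρ : ℝ) + 1) ^ (-a))
  rw [zero_mul] at hbound
  refine squeeze_zero' ?_ ?_ hbound
  · filter_upwards [eventually_gt_atTop 0] with t ht
    exact tsum_nonneg fun ρ => (replicaTerm_pos ht.le ρ).le
  · filter_upwards [eventually_gt_atTop 0] with t ht
    exact replicaS_le_inv_mul ha ht

lemma continuousOn_replicaS (ha : 1 < a) : ContinuousOn (replicaS a) (Ioi 0) := by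
  have hIci : ∀ ε > 0, ContinuousOn (replicaS a) (Ici ε) := by
    intro ε hε
    refine continuousOn_tsum (f := fun ρ t => replicaTerm a t ρ)
      (u := fun ρ : ℕ => ε⁻¹ * ((ρ : ℝ) + 1) ^ (-a)) (fun ρ => ?_)
      ((summable_rpow_neg_nat_succ ha).mul_left ε⁻¹) (fun ρ t ht => ?_)
    · refine continuousOn_const.div (by fun_prop) fun t ht => ?_
      have ht : ε ≤ t := ht
      have : 0 ≤ t := by linarith
      positivity
    · have ht : ε ≤ t := ht
      rw [Real.norm_of_nonneg (replicaTerm_pos (hε.le.trans ht) ρ).le]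
      exact ((strictAntiOn_replicaTerm ρ).antitoneOn hε.le (hε.le.trans ht) ht).trans
        (replicaTerm_le_inv_mul hε ρ)
  intro t ht
  exact ((hIci (t / 2) (half_pos ht)).continuousAt
    (Ici_mem_nhds (half_lt_self ht))).continuousWithinAt

lemma strictAntiOn_replicaS (ha : 1 < a) : StrictAntiOn (replicaS a) (Ioi 0) := by
  intro s hs t ht hst
  have hs' := Ioi_subset_Ici_self hs
  have ht' := Ioi_subset_Ici_self ht
  exact (summable_replicaTerm ha ht).tsum_lt_tsum
    (fun ρ => (strictAntiOn_replicaTerm ρ).antitoneOn hs' ht' hst.le)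
    (strictAntiOn_replicaTerm 0 hs' ht' hst)
    (summable_replicaTerm ha hs)

lemma nat_div_two_le_replicaS (ha : 1 < a) (ht : 0 < t) {N : ℕ} (hN : t * (N : ℝ) ^ a ≤ 1) :
    (N : ℝ) / 2 ≤ replicaS a t := by
  have hterm : ∀ ρ ∈ Finset.range N, 1 / 2 ≤ replicaTerm a t ρ := by
    intro ρ hρ
    have hρN : (ρ : ℝ) + 1 ≤ N := by exact_mod_cast Finset.mem_range.mp hρ
    refine one_half_le_replicaTerm ht.le (le_trans ?_ hN)
    gcongr
  calc (N : ℝ) / 2 = ∑ _ρ ∈ Finset.range N, (1 / 2 : ℝ) := by simp [div_eq_mul_inv]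
    _ ≤ ∑ ρ ∈ Finset.range N, replicaTerm a t ρ := Finset.sum_le_sum hterm
    _ ≤ replicaS a t :=
      (summable_replicaTerm ha ht).sum_le_tsum _ fun ρ _ => (replicaTerm_pos ht.le ρ).le

lemma tendsto_replicaS_nhdsGT_zero (ha : 1 < a) : Tendsto (replicaS a) (𝓝[>] 0) atTop := by
  refine tendsto_atTop.2 fun b => ?_
  obtain ⟨N, hN⟩ := exists_nat_ge (2 * b)
  have hN0 : (0 : ℝ) < N + 1 := by positivity
  filter_upwards [Ioc_mem_nhdsGT (Real.rpow_pos_of_pos hN0 (-a))] with t ⟨ht, htN⟩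
  have hbound := nat_div_two_le_replicaS ha ht (N := N + 1) <| by
    calc t * ((N + 1 : ℕ) : ℝ) ^ a ≤ ((N : ℝ) + 1) ^ (-a) * ((N : ℝ) + 1) ^ a := by
          push_cast
          gcongr
      _ = 1 := by rw [Real.rpow_neg hN0.le, inv_mul_cancel₀ (by positivity)]
  push_cast at hbound
  linarith

lemma tsum_rpow_neg_nat_add_le (ha : 1 < a) {N : ℕ} (hN : 0 < N) :
    ∑' k : ℕ, (((k + N : ℕ) : ℝ) + 1) ^ (-a) ≤ (N : ℝ) ^ (1 - a) / (a - 1) := by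
  have hN : (0 : ℝ) < N := by exact_mod_cast hN
  have anti : AntitoneOn (fun x : ℝ => x ^ (-a)) (Ici (N : ℝ)) := fun x hx y _ hxy =>
    Real.rpow_le_rpow_of_nonpos (hN.trans_le hx) hxy (by linarith)
  have h := anti.tsum_comp_add_le_integral N (integrableOn_Ioi_rpow_of_lt (by linarith) hN)
    fun x hx => Real.rpow_nonneg (hN.trans hx).le _
  rw [integral_Ioi_rpow_of_lt (by linarith) hN] at h
  push_cast at h ⊢
  convert h using 1
  rw [show -a + 1 = -(a - 1) by ring, show 1 - a = -(a - 1) by ring, neg_div_neg_eq]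

lemma replicaS_le_nat_add (ha : 1 < a) (ht : 0 < t) {N : ℕ} (hN : 0 < N) :
    replicaS a t ≤ N + t⁻¹ * ((N : ℝ) ^ (1 - a) / (a - 1)) := by
  have hs := summable_replicaTerm ha ht
  have hbase := (summable_nat_add_iff N).2 (summable_rpow_neg_nat_succ ha)
  rw [replicaS_eq_tsum, ← hs.sum_add_tsum_nat_add N]
  gcongr ?_ + ?_
  · simpa using Finset.sum_le_card_nsmul (Finset.range N) (replicaTerm a t) 1
      fun ρ _ => replicaTerm_le_one ht.le ρ
  · calc ∑' k, replicaTerm a t (k + N) ≤ ∑' k : ℕ, t⁻¹ * (((k + N : ℕ) : ℝ) + 1) ^ (-a) :=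
          ((summable_nat_add_iff N).2 hs).tsum_le_tsum (fun k => replicaTerm_le_inv_mul ht _)
            (hbase.mul_left t⁻¹)
      _ ≤ t⁻¹ * ((N : ℝ) ^ (1 - a) / (a - 1)) := by
          rw [tsum_mul_left]
          gcongr
          exact tsum_rpow_neg_nat_add_le ha hN

lemma div_four_le_replicaS_rpow_neg (ha : 1 < a) {x : ℝ} (hx : 1 ≤ x) :
    x / 4 ≤ replicaS a (x ^ (-a)) := by
  have hx0 : 0 < x := by linarith
  have hfloor : (1 : ℝ) ≤ ⌊x⌋₊ := by exact_mod_cast (Nat.one_le_floor_iff x).2 hx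
  have hfloor' := Nat.lt_floor_add_one x
  calc x / 4 ≤ (⌊x⌋₊ : ℝ) / 2 := by linarith
    _ ≤ replicaS a (x ^ (-a)) := nat_div_two_le_replicaS ha (by positivity) <| by
        calc x ^ (-a) * (⌊x⌋₊ : ℝ) ^ a ≤ x ^ (-a) * x ^ a := by
              gcongr
              exact Nat.floor_le hx0.le
          _ = 1 := by rw [Real.rpow_neg hx0.le, inv_mul_cancel₀ (by positivity)]

lemma replicaS_rpow_neg_le (ha : 1 < a) {x : ℝ} (hx : 1 ≤ x) :
    replicaS a (x ^ (-a)) ≤ (2 + 1 / (a - 1)) * x := by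
  have hx0 : 0 < x := by linarith
  have hceil := Nat.ceil_lt_add_one (R := ℝ) hx0.le
  have htail : (x ^ (-a))⁻¹ * ((⌈x⌉₊ : ℝ) ^ (1 - a) / (a - 1)) ≤ x / (a - 1) := by
    rw [Real.rpow_neg hx0.le, inv_inv, mul_div_assoc']
    gcongr ?_ / _
    calc x ^ a * (⌈x⌉₊ : ℝ) ^ (1 - a) ≤ x ^ a * x ^ (1 - a) :=
          mul_le_mul_of_nonneg_left
            (Real.rpow_le_rpow_of_nonpos hx0 (Nat.le_ceil x) (by linarith)) (by positivity)
      _ = x := by rw [← Real.rpow_add hx0]; simp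
  have hsplit : (2 + 1 / (a - 1)) * x = 2 * x + x / (a - 1) := by ring
  linarith [replicaS_le_nat_add ha (by positivity : 0 < x ^ (-a)) (Nat.ceil_pos.2 hx0)]

lemma replicaS_scale_of_le_one (ha : 1 < a) (ht : 0 < t) (ht1 : t ≤ 1) :
    4 ^ (-a) * replicaS a t ^ (-a) ≤ t ∧
      t ≤ (2 + 1 / (a - 1)) ^ a * replicaS a t ^ (-a) := by
  obtain ⟨x, hx, rfl⟩ : ∃ x, 1 ≤ x ∧ x ^ (-a) = t :=
    ⟨t ^ (-a)⁻¹, Real.one_le_rpow_of_pos_of_le_one_of_nonpos ht ht1 (inv_nonpos.2 (by linarith)),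
      Real.rpow_inv_rpow ht.le (by linarith)⟩
  have hx0 : 0 < x := by linarith
  have ha0 : -a ≤ 0 := by linarith
  have hC : (0 : ℝ) < 2 + 1 / (a - 1) := by
    have : 0 < 1 / (a - 1) := one_div_pos.2 (by linarith)
    linarith
  have hlow := div_four_le_replicaS_rpow_neg ha hx
  have hup := replicaS_rpow_neg_le ha hx
  have hS : 0 < replicaS a (x ^ (-a)) := by linarith
  constructor
  · calc 4 ^ (-a) * replicaS a (x ^ (-a)) ^ (-a) = (4 * replicaS a (x ^ (-a))) ^ (-a) :=
          (Real.mul_rpow (by norm_num) hS.le).symm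
      _ ≤ x ^ (-a) := Real.rpow_le_rpow_of_nonpos hx0 (by linarith) ha0
  · calc x ^ (-a) = (2 + 1 / (a - 1)) ^ a * ((2 + 1 / (a - 1)) * x) ^ (-a) := by
          rw [Real.mul_rpow hC.le hx0.le, Real.rpow_neg hC.le, ← mul_assoc,
            mul_inv_cancel₀ (by positivity), one_mul]
      _ ≤ (2 + 1 / (a - 1)) ^ a * replicaS a (x ^ (-a)) ^ (-a) :=
          mul_le_mul_of_nonneg_left (Real.rpow_le_rpow_of_nonpos hS hup ha0)
            (by positivity)

end

/-- For a power-law spectrum `λ_ρ = ρ^{−a}` with `a > 1`, the sum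
`S(t) = Σ_ρ 1/(1 + t/λ_ρ)` is finite, continuous and strictly decreasing on `(0,∞)`,
blows up as `t → 0⁺` and vanishes as `t → ∞`; hence for every `P > 0` there is a
unique `t_P > 0` with `S(t_P) = P`, and `t_P ≍ P^{−a}` for large `P` — the order of
the rank-`P` eigenvalue. -/
theorem replica_self_consistent_scale
    (a : ℝ) (ha : 1 < a) :
    (∀ t : ℝ, 0 < t → Summable (fun ρ : ℕ => 1 / (1 + t * ((ρ : ℝ) + 1) ^ a))) ∧
    ContinuousOn (replicaS a) (Set.Ioi 0) ∧
    StrictAntiOn (replicaS a) (Set.Ioi 0) ∧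
    Tendsto (replicaS a) (nhdsWithin 0 (Set.Ioi 0)) atTop ∧
    Tendsto (replicaS a) atTop (nhds 0) ∧
    (∀ P : ℝ, 0 < P → ∃! t : ℝ, 0 < t ∧ replicaS a t = P) ∧
    ∃ c C : ℝ, 0 < c ∧ c ≤ C ∧ ∃ P₀ : ℝ, ∀ P : ℝ, P₀ ≤ P →
      ∀ t : ℝ, 0 < t → replicaS a t = P →
        c * P ^ (-a) ≤ t ∧ t ≤ C * P ^ (-a) := by
  have hcont := continuousOn_replicaS ha
  have hanti := strictAntiOn_replicaS ha
  have hzero := tendsto_replicaS_nhdsGT_zero ha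
  have hinfty := tendsto_replicaS_atTop ha
  refine ⟨fun t ht => summable_replicaTerm ha ht, hcont, hanti, hzero, hinfty,
    fun P hP => hanti.existsUnique_eq_of_tendsto hcont hzero hinfty hP,
    4 ^ (-a), (2 + 1 / (a - 1)) ^ a, by positivity, ?_, replicaS a 1, ?_⟩
  · have hC : 1 ≤ 2 + 1 / (a - 1) := by
      have : 0 < 1 / (a - 1) := one_div_pos.2 (by linarith)
      linarith
    calc (4 : ℝ) ^ (-a) ≤ 1 := Real.rpow_le_one_of_one_le_of_nonpos (by norm_num) (by linarith)
      _ ≤ (2 + 1 / (a - 1)) ^ a := Real.one_le_rpow hC (by linarith)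
  · rintro P hP t ht rfl
    have ht1 : t ≤ 1 := (hanti.le_iff_ge (mem_Ioi.2 one_pos) ht).1 hP
    exact replicaS_scale_of_le_one ha ht ht1
end
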